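/- arXiv:0710.5562 — 7 statements merged into one kernel-verified Lean document; each statement's English description precedes it below -/
import Mathlib

section
/- Let K be a non-archimedean local field with normalized Haar measure μ, X ⊆ K open, and f : X → K strictly differentiable on X with f(X) ⊆ X. If the transformation f : X → X preserves the restriction of Haar measure μ to X, then |f'(a)| ≥ 1 for every a ∈ X. -/
/-!
If `‖f'(a)‖ < c < 1`, then `f` maps a small ball `closedBall a r` into `closedBall (f a) (c * r)`,
so measure preservation gives `μ (closedBall a r) ≤ μ (closedBall (f a) (c * r))`. Taking `r = ‖x₀‖`,
ultrametricity makes `closedBall 0 r` contain the two disjoint translates `closedBall 0 (c * r)` and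
`closedBall x₀ (c * r)`, so by translation invariance the smaller ball has strictly smaller measure.
-/

open Filter Metric MeasureTheory Topology

theorem HasDerivAt.eventually_norm_sub_le {𝕜 F : Type*} [NontriviallyNormedField 𝕜]
    [NormedAddCommGroup F] [NormedSpace 𝕜 F] {f : 𝕜 → F} {f' : F} {a : 𝕜}
    (hf : HasDerivAt f f' a) {c : ℝ} (hc : ‖f'‖ < c) :
    ∀ᶠ x in 𝓝 a, ‖f x - f a‖ ≤ c * ‖x - a‖ := by
  filter_upwards [hf.isLittleO.def (sub_pos.2 hc)] with x hx
  calc ‖f x - f a‖ ≤ ‖f x - f a - (x - a) • f'‖ + ‖(x - a) • f'‖ := norm_le_norm_sub_add _ _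
    _ ≤ (c - ‖f'‖) * ‖x - a‖ + ‖x - a‖ * ‖f'‖ := by rw [norm_smul]; gcongr
    _ = c * ‖x - a‖ := by ring

theorem hasDerivAt_of_tendsto_slope_offDiag {𝕜 : Type*} [NontriviallyNormedField 𝕜]
    {f : 𝕜 → 𝕜} {f' a : 𝕜}
    (hf : Tendsto (fun q : 𝕜 × 𝕜 => (f q.1 - f q.2) / (q.1 - q.2))
      ((𝓝 a ×ˢ 𝓝 a) ⊓ 𝓟 {q : 𝕜 × 𝕜 | q.1 ≠ q.2}) (𝓝 f')) :
    HasDerivAt f f' a := by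
  refine hasDerivAt_iff_tendsto_slope.2 ?_
  have hpair : Tendsto (fun x => (x, a)) (𝓝[≠] a) ((𝓝 a ×ˢ 𝓝 a) ⊓ 𝓟 {q : 𝕜 × 𝕜 | q.1 ≠ q.2}) :=
    tendsto_inf.2 ⟨tendsto_nhdsWithin_of_tendsto_nhds (tendsto_id.prodMk tendsto_const_nhds),
      tendsto_principal.2 self_mem_nhdsWithin⟩
  simpa only [Function.comp_def, ← slope_def_field] using hf.comp hpair

theorem IsUltrametricDist.measure_closedBall_lt_of_lt_norm {E : Type*} [NormedAddCommGroup E]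
    [IsUltrametricDist E] [ProperSpace E] [MeasurableSpace E] [BorelSpace E]
    (μ : Measure E) [μ.IsAddHaarMeasure] {x : E} {s : ℝ} (hs : 0 < s) (hsx : s < ‖x‖)
    (b b' : E) : μ (closedBall b s) < μ (closedBall b' ‖x‖) := by
  rw [Measure.addHaar_closedBall_center μ b, Measure.addHaar_closedBall_center μ b']
  have hdisj : Disjoint (closedBall 0 s) (closedBall x s) := by
    refine Set.disjoint_left.2 fun z hz0 hzx => hsx.not_ge ?_
    rw [mem_closedBall] at hz0 hzx
    simpa using (dist_triangle_max x z 0).trans (max_le (dist_comm x z ▸ hzx) hz0)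
  have hsub : closedBall 0 s ∪ closedBall x s ⊆ closedBall (0 : E) ‖x‖ := by
    refine Set.union_subset (closedBall_subset_closedBall hsx.le) ?_
    rw [IsUltrametricDist.closedBall_eq_of_mem (x := 0) (y := x) (r := ‖x‖) (by simp)]
    exact closedBall_subset_closedBall hsx.le
  have hpos : 0 < μ (closedBall (0 : E) s) := measure_closedBall_pos μ 0 hs
  calc μ (closedBall 0 s) < μ (closedBall 0 s) + μ (closedBall x s) := by
        rw [Measure.addHaar_closedBall_center μ x]
        exact ENNReal.lt_add_right measure_closedBall_lt_top.ne hpos.ne'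
    _ = μ (closedBall 0 s ∪ closedBall x s) := (measure_union hdisj measurableSet_closedBall).symm
    _ ≤ μ (closedBall 0 ‖x‖) := measure_mono hsub

theorem stmt1_general {K : Type*} [NontriviallyNormedField K] [IsUltrametricDist K]
    [ProperSpace K]
    [MeasurableSpace K] [BorelSpace K] (μ : Measure K) [μ.IsAddHaarMeasure]
    (X : Set K) (hX : IsOpen X) (f : K → K) (hf : Set.MapsTo f X X)
    (D : K → K)
    (hD : ∀ a ∈ X, Filter.Tendsto (fun q : K × K => (f q.1 - f q.2) / (q.1 - q.2))
      ((nhds a ×ˢ nhds a) ⊓ Filter.principal {q : K × K | q.1 ≠ q.2}) (nhds (D a)))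
    (hmp : ∀ S ⊆ X, MeasurableSet S → μ (X ∩ f ⁻¹' S) = μ S) :
    ∀ a ∈ X, 1 ≤ ‖D a‖ := by
  intro a ha
  by_contra! hlt
  obtain ⟨c, hDc, hc1⟩ := exists_between hlt
  have hnear : ∀ᶠ x in 𝓝 a, x ∈ X ∧ ‖f x - f a‖ ≤ c * ‖x - a‖ := (hX.eventually_mem ha).and
    ((hasDerivAt_of_tendsto_slope_offDiag (hD a ha)).eventually_norm_sub_le hDc)
  obtain ⟨δ, hδ, hball⟩ := eventually_nhds_iff_ball.1 hnear
  obtain ⟨x₀, hx₀, hx₀δ⟩ := NormedField.exists_norm_lt K hδ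
  have hcr : c * ‖x₀‖ < ‖x₀‖ := mul_lt_of_lt_one_left hx₀ hc1
  have hc₀ : 0 < c := (norm_nonneg _).trans_lt hDc
  have hcr₀ : 0 < c * ‖x₀‖ := mul_pos hc₀ hx₀
  set S := X ∩ closedBall (f a) (c * ‖x₀‖)
  have hmaps : closedBall a ‖x₀‖ ⊆ X ∩ f ⁻¹' S := by
    intro x hx
    rw [mem_closedBall_iff_norm] at hx
    obtain ⟨hxX, hxf⟩ := hball x (mem_ball_iff_norm.2 (hx.trans_lt hx₀δ))
    exact ⟨hxX, hf hxX, mem_closedBall_iff_norm.2 (hxf.trans (by gcongr))⟩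
  have hshrink : μ (closedBall a ‖x₀‖) < μ (closedBall a ‖x₀‖) :=
    calc μ (closedBall a ‖x₀‖) ≤ μ (X ∩ f ⁻¹' S) := measure_mono hmaps
      _ = μ S := hmp S Set.inter_subset_left (hX.measurableSet.inter measurableSet_closedBall)
      _ ≤ μ (closedBall (f a) (c * ‖x₀‖)) := measure_mono Set.inter_subset_right
      _ < μ (closedBall a ‖x₀‖) :=
        IsUltrametricDist.measure_closedBall_lt_of_lt_norm μ hcr₀ hcr _ _
  exact hshrink.false

/-- If `f` is strictly differentiable on an open subset `X` of a
non-archimedean local field, maps `X` into `X`, and preserves the restriction of the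
normalized Haar measure to `X`, then `‖f'(a)‖ ≥ 1` for every `a ∈ X`. -/
theorem stmt1 {K : Type*} [NontriviallyNormedField K] [IsUltrametricDist K]
    [CompleteSpace K] [ProperSpace K]
    [MeasurableSpace K] [BorelSpace K] (μ : Measure K) [μ.IsAddHaarMeasure]
    (hμ1 : μ (closedBall (0 : K) 1) = 1)
    (X : Set K) (hX : IsOpen X) (f : K → K) (hf : Set.MapsTo f X X)
    (D : K → K)
    (hD : ∀ a ∈ X, Filter.Tendsto (fun q : K × K => (f q.1 - f q.2) / (q.1 - q.2))
      ((nhds a ×ˢ nhds a) ⊓ Filter.principal {q : K × K | q.1 ≠ q.2}) (nhds (D a)))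
    (hmp : ∀ S ⊆ X, MeasurableSet S → μ (X ∩ f ⁻¹' S) = μ S) :
    ∀ a ∈ X, 1 ≤ ‖D a‖ :=
  stmt1_general μ X hX f hf D hD hmp
end

section
/- Let K be a non-archimedean local field, X ⊆ K compact-open, and T : X → X a locally scaling transformation for radius r with scaling function C (i.e., X is a finite union of r-balls and |T(x)−T(y)| = C(x)·|x−y| whenever |x−y| ≤ r, with C(x) ≥ 1). Then for every a ∈ X and every r' ≤ r in the value group, the restriction of T to B_{r'}(a) is a bijection from B_{r'}(a) onto B_{r'·C(a)}(T(a)). -/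
/-!
Inside a ball `B = B_{r'}(a)` with `r' ≤ r` any two points are at distance `≤ r`, so the
scaling function is constant `= C(a)` on `B` and `T` multiplies all distances in `B` by
`C(a)`. Since `r'` is a value of the norm, so is `C(a) = |T(a + z) - T(a)| / |z|`, say
`C(a) = |c|`; then `x ↦ a + c⁻¹ (T x - T a)` is an isometry of the compact ball `B` into
itself, hence onto, which is exactly surjectivity of `T : B → B_{r'·C(a)}(T a)`.
-/

open Metric Function Set

/-- The orbit of any point `b` recurs, so `b` is a limit of the points `f^[k+1] b`. -/
theorem Isometry.surjective_of_compactSpace {α : Type*} [MetricSpace α] [CompactSpace α]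
    {f : α → α} (hf : Isometry f) : Surjective f := by
  intro b
  have hiter : ∀ n, Isometry f^[n] := fun n => by
    induction n with
    | zero => exact isometry_id
    | succ n ih => rw [iterate_succ]; exact ih.comp hf
  have hclosed : IsClosed (range f) := (isCompact_range hf.continuous).isClosed
  suffices b ∈ closure (range f) by rwa [hclosed.closure_eq] at this
  rw [mem_closure_range_iff]
  intro ε hε
  obtain ⟨_, -, φ, hφ, hlim⟩ :=
    IsCompact.tendsto_subseq (x := fun n => f^[n] b) isCompact_univ fun _ => trivial
  obtain ⟨N, hN⟩ := Metric.cauchySeq_iff'.1 hlim.cauchySeq ε hε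
  obtain ⟨k, hk⟩ : ∃ k, φ (N + 1) = φ N + (k + 1) :=
    ⟨φ (N + 1) - φ N - 1, by have := hφ (Nat.lt_add_one N); omega⟩
  refine ⟨f^[k] b, ?_⟩
  calc dist b (f (f^[k] b)) = dist (f^[φ N] b) (f^[φ (N + 1)] b) := by
        rw [hk, iterate_add_apply, ← iterate_succ_apply' f, (hiter _).dist_eq]
    _ < ε := by rw [dist_comm]; exact hN (N + 1) N.le_succ

theorem IsCompact.surjOn_of_dist_eq {α : Type*} [MetricSpace α] {s : Set α} (hs : IsCompact s)
    {f : α → α} (hmap : MapsTo f s s) (hf : ∀ x ∈ s, ∀ y ∈ s, dist (f x) (f y) = dist x y) :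
    SurjOn f s s := by
  have : CompactSpace s := isCompact_iff_compactSpace.1 hs
  refine hmap.restrict_surjective_iff.1 (Isometry.surjective_of_compactSpace ?_)
  exact Isometry.of_dist_eq fun x y => hf x x.2 y y.2

section NormedField

variable {K : Type*} [NormedField K] {T : K → K} {a : K} {ρ : ℝ}

theorem bijOn_closedBall_of_norm_sub_eq_mul [ProperSpace K] (hρ : 0 ≤ ρ) {c : K} (hc : c ≠ 0)
    (hT : ∀ x ∈ closedBall a ρ, ∀ y ∈ closedBall a ρ, ‖T x - T y‖ = ‖c‖ * ‖x - y‖) :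
    BijOn T (closedBall a ρ) (closedBall (T a) (ρ * ‖c‖)) := by
  have hc' : 0 < ‖c‖ := norm_pos_iff.2 hc
  have ha : a ∈ closedBall a ρ := mem_closedBall_self hρ
  refine ⟨fun x hx => ?_, fun x hx y hy hxy => ?_, fun b hb => ?_⟩
  · rw [mem_closedBall_iff_norm, hT x hx a ha, mul_comm]
    exact mul_le_mul_of_nonneg_right (mem_closedBall_iff_norm.1 hx) hc'.le
  · simpa [hxy, hc, sub_eq_zero, eq_comm] using hT x hx y hy
  set g : K → K := fun x => a + c⁻¹ * (T x - T a)
  have hg : ∀ x y, g x - g y = c⁻¹ * (T x - T y) := fun x y => by simp only [g]; ring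
  have hgmap : MapsTo g (closedBall a ρ) (closedBall a ρ) := fun x hx => by
    rw [mem_closedBall_iff_norm, show g x - a = g x - g a by simp [g], hg, norm_mul, norm_inv,
      hT x hx a ha, inv_mul_cancel_left₀ hc'.ne']
    exact mem_closedBall_iff_norm.1 hx
  have hgiso : ∀ x ∈ closedBall a ρ, ∀ y ∈ closedBall a ρ, dist (g x) (g y) = dist x y :=
    fun x hx y hy => by
      rw [dist_eq_norm, dist_eq_norm, hg, norm_mul, norm_inv, hT x hx y hy,
        inv_mul_cancel_left₀ hc'.ne']
  have hb' : a + c⁻¹ * (b - T a) ∈ closedBall a ρ := by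
    rw [mem_closedBall_iff_norm, add_sub_cancel_left, norm_mul, norm_inv, inv_mul_le_iff₀ hc',
      mul_comm]
    exact mem_closedBall_iff_norm.1 hb
  obtain ⟨x, hx, hgx⟩ := (isCompact_closedBall a ρ).surjOn_of_dist_eq hgmap hgiso hb'
  exact ⟨x, hx, by simpa [g, hc] using hgx⟩

theorem exists_norm_eq_of_norm_sub_eq_mul {s : ℝ} {z : K} (hz : z ≠ 0)
    (hT : ∀ x ∈ closedBall a ‖z‖, ∀ y ∈ closedBall a ‖z‖, ‖T x - T y‖ = s * ‖x - y‖) :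
    ∃ c : K, ‖c‖ = s := by
  refine ⟨(T (a + z) - T a) / z, ?_⟩
  have hza : a + z ∈ closedBall a ‖z‖ := by simp [mem_closedBall, dist_eq_norm]
  rw [norm_div, hT _ hza a (mem_closedBall_self (norm_nonneg z)), add_sub_cancel_left,
    mul_div_cancel_right₀ _ (norm_ne_zero_iff.2 hz)]

end NormedField

section Ultrametric

variable {K : Type*} [NormedField K] [IsUltrametricDist K] {a : K} {ρ : ℝ}

theorem norm_sub_le_of_mem_closedBall {x y : K} (hx : x ∈ closedBall a ρ)
    (hy : y ∈ closedBall a ρ) : ‖x - y‖ ≤ ρ := by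
  rw [IsUltrametricDist.closedBall_eq_of_mem hy, mem_closedBall_iff_norm] at hx
  exact hx

theorem norm_sub_eq_mul_of_mem_closedBall {X : Set K} {r : ℝ} {T : K → K} {C : K → ℝ}
    (hXr : ∀ x ∈ X, closedBall x r ⊆ X)
    (hscal : ∀ x ∈ X, ∀ y ∈ X, ‖x - y‖ ≤ r → ‖T x - T y‖ = C x * ‖x - y‖)
    (ha : a ∈ X) (hρ : ρ ≤ r) :
    ∀ x ∈ closedBall a ρ, ∀ y ∈ closedBall a ρ, ‖T x - T y‖ = C a * ‖x - y‖ := by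
  have hX : ∀ x ∈ closedBall a ρ, x ∈ X := fun x hx =>
    hXr a ha (closedBall_subset_closedBall hρ hx)
  have hnear : ∀ x ∈ closedBall a ρ, ∀ y ∈ closedBall a ρ, ‖x - y‖ ≤ r := fun x hx y hy =>
    (norm_sub_le_of_mem_closedBall hx hy).trans hρ
  intro x hx y hy
  rw [hscal x (hX x hx) y (hX y hy) (hnear x hx y hy)]
  have ha' : a ∈ closedBall a ρ := mem_closedBall_self (nonneg_of_mem_closedBall hx)
  rcases eq_or_ne x a with rfl | hxa
  · rfl
  have hCx : C x * ‖x - a‖ = C a * ‖x - a‖ := by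
    rw [← hscal x (hX x hx) a ha (hnear x hx a ha'), norm_sub_rev,
      hscal a ha x (hX x hx) (hnear a ha' x hx), norm_sub_rev]
  rw [mul_right_cancel₀ (norm_ne_zero_iff.2 (sub_ne_zero.2 hxa)) hCx]

end Ultrametric

theorem stmt3_general {K : Type*} [NontriviallyNormedField K] [IsUltrametricDist K]
    [ProperSpace K]
    (X : Set K)
    (r : ℝ)
    (hXr : ∀ x ∈ X, closedBall x r ⊆ X)
    (T : K → K)
    (C : K → ℝ) (hC1 : ∀ x ∈ X, 1 ≤ C x)
    (hscal : ∀ x ∈ X, ∀ y ∈ X, ‖x - y‖ ≤ r → ‖T x - T y‖ = C x * ‖x - y‖) :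
    ∀ a ∈ X, ∀ r' : ℝ, (∃ z : K, z ≠ 0 ∧ ‖z‖ = r') → r' ≤ r →
      Set.BijOn T (closedBall a r') (closedBall (T a) (r' * C a)) := by
  intro a ha r' ⟨z, hz, hzr'⟩ hr'
  subst hzr'
  have hTa := norm_sub_eq_mul_of_mem_closedBall hXr hscal ha hr'
  obtain ⟨c, hc⟩ := exists_norm_eq_of_norm_sub_eq_mul hz hTa
  have hc0 : c ≠ 0 := norm_pos_iff.1 (hc ▸ zero_lt_one.trans_le (hC1 a ha))
  rw [← hc] at hTa ⊢
  exact bijOn_closedBall_of_norm_sub_eq_mul (norm_nonneg z) hc0 hTa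

/-- A locally scaling transformation `T` (for radius `r`, with scaling
function `C ≥ 1`) on a compact-open subset `X` of a non-archimedean local field maps
each ball `B_{r'}(a)` (`r' ≤ r` in the value group) bijectively onto
`B_{r'·C(a)}(T(a))`. -/
theorem stmt3 {K : Type*} [NontriviallyNormedField K] [IsUltrametricDist K]
    [CompleteSpace K] [ProperSpace K]
    (X : Set K) (hXc : IsCompact X) (hXo : IsOpen X)
    (r : ℝ) (hr : ∃ z : K, z ≠ 0 ∧ ‖z‖ = r)
    (hXr : ∀ x ∈ X, closedBall x r ⊆ X)
    (T : K → K) (hT : Set.MapsTo T X X)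
    (C : K → ℝ) (hC1 : ∀ x ∈ X, 1 ≤ C x)
    (hscal : ∀ x ∈ X, ∀ y ∈ X, ‖x - y‖ ≤ r → ‖T x - T y‖ = C x * ‖x - y‖) :
    ∀ a ∈ X, ∀ r' : ℝ, (∃ z : K, z ≠ 0 ∧ ‖z‖ = r') → r' ≤ r →
      Set.BijOn T (closedBall a r') (closedBall (T a) (r' * C a)) :=
  stmt3_general X r hXr T C hC1 hscal
end

section
/- Let K be a non-archimedean local field with normalized Haar measure μ, X ⊆ K compact-open, T : X → X locally scaling for radius r, H = X/B_r(0), and A : H×H → R_{≥0} the associated transition matrix defined by A(i,j) = 0 if i ∩ T^{-1}(j) = ∅ and A(i,j) = μ(B_{1/C(i)}(0)) otherwise. Then A is a stochastic matrix: for each i ∈ H, the sum over j ∈ H of A(i,j) equals 1. -/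
/-!
On an `r`-ball `B` of `X` the scaling factor is constant, say `c`, and the ultrametric
inequality shows that each nonempty slice `B ∩ T⁻¹(B_r(j))` is a ball of radius `r / c`.
Since `r = ‖z‖` for some `z ∈ K`, Haar measure scales multiplicatively on balls, so each
nonempty slice has measure `μ(B_{1/c}(0)) · μ(B) = A(i, j) · μ(B)`. The slices partition `B`,
so the row sum of `A` times `μ(B)` equals `μ(B)`.
-/

open Metric MeasureTheory
open scoped Pointwise

theorem dist_map_eq_mul_dist_of_forall_mem_closedBall {α β : Type*} [MetricSpace α]
    [PseudoMetricSpace β] {T : α → β} {C : α → ℝ} {i : α} {r : ℝ}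
    (hscal : ∀ x ∈ closedBall i r, ∀ y ∈ closedBall i r,
      dist (T x) (T y) = C x * dist x y) :
    ∀ x ∈ closedBall i r, ∀ y ∈ closedBall i r, dist (T x) (T y) = C i * dist x y := by
  intro x hx y hy
  rcases eq_or_ne x i with rfl | hxi
  · exact hscal x hx y hy
  have hi : i ∈ closedBall i r := mem_closedBall_self (dist_nonneg.trans hx)
  have hCx : C x = C i := mul_right_cancel₀ (dist_ne_zero.mpr hxi) <| by
    rw [← hscal x hx i hi, dist_comm, hscal i hi x hx, dist_comm i]
  rw [hscal x hx y hy, hCx]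

namespace IsUltrametricDist

variable {α : Type*} [PseudoMetricSpace α] [IsUltrametricDist α]

theorem closedBall_inter_preimage_closedBall_eq {T : α → α} {i j x : α} {r c : ℝ}
    (hc : 1 ≤ c)
    (hscal : ∀ y ∈ closedBall i r, dist (T y) (T x) = c * dist y x)
    (hx : x ∈ closedBall i r ∩ T ⁻¹' closedBall j r) :
    closedBall i r ∩ T ⁻¹' closedBall j r = closedBall x (r / c) := by
  have hc0 : 0 < c := one_pos.trans_le hc
  have hrc : r / c ≤ r := div_le_self (dist_nonneg.trans hx.1) hc
  rw [closedBall_eq_of_mem hx.1] at hscal ⊢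
  rw [closedBall_eq_of_mem hx.2]
  ext y
  simp only [Set.mem_inter_iff, Set.mem_preimage, mem_closedBall]
  constructor
  · rintro ⟨hy, hTy⟩
    rw [hscal y hy] at hTy
    exact (le_div_iff₀' hc0).mpr hTy
  · intro hy
    have hy' : dist y x ≤ r := hy.trans hrc
    exact ⟨hy', (hscal y hy').trans_le ((le_div_iff₀' hc0).mp hy)⟩

theorem dist_le_of_mem_closedBall {i x y : α} {r : ℝ} (hx : x ∈ closedBall i r)
    (hy : y ∈ closedBall i r) : dist x y ≤ r :=
  (dist_triangle_max x i y).trans (max_le hx (dist_comm i y ▸ hy))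

theorem pairwiseDisjoint_closedBall_of_lt_dist {s : Set α} {r : ℝ}
    (hs : s.Pairwise fun b b' => r < dist b b') : s.PairwiseDisjoint (closedBall · r) :=
  fun _ hb _ hb' hne => Set.disjoint_left.mpr fun _ hy hy' => (hs hb hb' hne).not_ge <|
    dist_le_of_mem_closedBall (mem_closedBall_comm.mp hy) (mem_closedBall_comm.mp hy')

end IsUltrametricDist

theorem measure_closedBall_norm_mul {K : Type*} [NontriviallyNormedField K] [ProperSpace K]
    [MeasurableSpace K] [BorelSpace K] (μ : Measure K) [μ.IsAddHaarMeasure]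
    (hμ1 : μ (closedBall (0 : K) 1) = 1) {a : K} (ha : a ≠ 0) (s : ℝ) :
    μ (closedBall (0 : K) (‖a‖ * s)) =
      μ (closedBall (0 : K) ‖a‖) * μ (closedBall (0 : K) s) := by
  have hscale (t : ℝ) : μ (closedBall (0 : K) (‖a‖ * t)) =
      distribHaarChar K (Units.mk0 a ha) * μ (closedBall (0 : K) t) := by
    rw [distribHaarChar_mul, Units.smul_def, Units.val_mk0, smul_closedBall' ha, smul_zero]
  rw [hscale s, ← mul_one ‖a‖, hscale 1, hμ1, mul_one]

theorem sum_eq_one_of_measureReal_eq_mul {Ω ι : Type*} [MeasurableSpace Ω] {μ : Measure Ω}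
    {B : Set Ω} {s : Finset ι} {S : ι → Set Ω} {a : ι → ℝ}
    (hdisj : (s : Set ι).PairwiseDisjoint S) (hmeas : ∀ j ∈ s, MeasurableSet (S j))
    (hunion : ⋃ j ∈ s, S j = B) (hB : μ B ≠ ⊤) (hB0 : μ B ≠ 0)
    (hS : ∀ j ∈ s, μ.real (S j) = a j * μ.real B) :
    ∑ j ∈ s, a j = 1 := by
  have hfin : ∀ j ∈ s, μ (S j) ≠ ⊤ :=
    fun j hj => measure_ne_top_of_subset (hunion ▸ Set.subset_biUnion_of_mem hj) hB
  have hsum := measureReal_biUnion_finset hdisj hmeas hfin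
  rw [hunion, Finset.sum_congr rfl hS, ← Finset.sum_mul, eq_comm] at hsum
  exact (mul_eq_right₀ (ENNReal.toReal_ne_zero.mpr ⟨hB0, hB⟩)).mp hsum

open scoped Classical in
theorem stmt5_general {K : Type*} [NontriviallyNormedField K] [IsUltrametricDist K]
    [ProperSpace K]
    [MeasurableSpace K] [BorelSpace K] (μ : Measure K) [μ.IsAddHaarMeasure]
    (hμ1 : μ (closedBall (0 : K) 1) = 1)
    (X : Set K) (r : ℝ) (hr : ∃ z : K, z ≠ 0 ∧ ‖z‖ = r)
    (reps : Finset K) (hcover : X = ⋃ b ∈ reps, closedBall b r)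
    (hdisj : ∀ b ∈ reps, ∀ b' ∈ reps, b ≠ b' → r < ‖b - b'‖)
    (T : K → K) (hT : Set.MapsTo T X X)
    (C : K → ℝ) (hC1 : ∀ x ∈ X, 1 ≤ C x)
    (hscal : ∀ x ∈ X, ∀ y ∈ X, ‖x - y‖ ≤ r → ‖T x - T y‖ = C x * ‖x - y‖)
    (A : K → K → ℝ)
    (hA : ∀ i j : K, A i j =
      if closedBall i r ∩ T ⁻¹' (closedBall j r) = ∅ then 0
      else (μ (closedBall (0 : K) (1 / C i))).toReal) :
    ∀ i ∈ reps, ∑ j ∈ reps, A i j = 1 := by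
  intro i hi
  obtain ⟨z, hz0, hzr⟩ := hr
  have hr0 : 0 < r := hzr ▸ norm_pos_iff.mpr hz0
  have hBX : closedBall i r ⊆ X :=
    hcover ▸ Set.subset_biUnion_of_mem (u := (closedBall · r)) hi
  have hscalB := dist_map_eq_mul_dist_of_forall_mem_closedBall (T := T) (C := C)
    fun x hx y hy => by
      simpa only [dist_eq_norm] using
        hscal x (hBX hx) y (hBX hy)
          (dist_eq_norm x y ▸ IsUltrametricDist.dist_le_of_mem_closedBall hx hy)
  have hslice (j x : K) (hx : x ∈ closedBall i r ∩ T ⁻¹' closedBall j r) :=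
    IsUltrametricDist.closedBall_inter_preimage_closedBall_eq
      (hC1 i (hBX (mem_closedBall_self hr0.le))) (fun y hy => hscalB y hy x hx.1) hx
  refine sum_eq_one_of_measureReal_eq_mul (μ := μ)
    (S := fun j => closedBall i r ∩ T ⁻¹' closedBall j r) ?_ ?_ ?_
    measure_closedBall_lt_top.ne (measure_closedBall_pos μ i hr0).ne' fun j _ => ?_
  · have hballs := IsUltrametricDist.pairwiseDisjoint_closedBall_of_lt_dist
      (s := (reps : Set K)) (r := r) fun b hb b' hb' hne => by
        simpa only [dist_eq_norm] using hdisj b hb b' hb' hne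
    exact fun j hj j' hj' hne => ((hballs hj hj' hne).preimage T).mono
      Set.inter_subset_right Set.inter_subset_right
  · intro j _
    rcases (closedBall i r ∩ T ⁻¹' closedBall j r).eq_empty_or_nonempty with h | ⟨x, hx⟩
    · exact h ▸ MeasurableSet.empty
    · exact hslice j x hx ▸ measurableSet_closedBall
  · rw [← Set.inter_iUnion₂, ← Set.preimage_iUnion₂, ← hcover]
    exact Set.inter_eq_left.mpr (hT.mono_left hBX).subset_preimage
  · rw [hA]
    split_ifs with h
    · rw [h, measureReal_empty, zero_mul]
    obtain ⟨x, hx⟩ := Set.nonempty_iff_ne_empty.mpr h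
    rw [hslice j x hx, measureReal_def, measureReal_def, Measure.addHaar_closedBall_center μ x,
      Measure.addHaar_closedBall_center μ i, div_eq_mul_one_div, ← hzr,
      measure_closedBall_norm_mul μ hμ1 hz0, ENNReal.toReal_mul, mul_comm]

/-- The associated transition matrix of a locally scaling transformation
is a stochastic matrix: every row sums to 1.  Here `reps` is a set of representatives
for the `r`-ball cosets `H = X/B_r(0)` making up the compact-open set `X`. -/
theorem stmt5 {K : Type*} [NontriviallyNormedField K] [IsUltrametricDist K]
    [CompleteSpace K] [ProperSpace K]
    [MeasurableSpace K] [BorelSpace K] (μ : Measure K) [μ.IsAddHaarMeasure]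
    (hμ1 : μ (closedBall (0 : K) 1) = 1)
    (X : Set K) (r : ℝ) (hr : ∃ z : K, z ≠ 0 ∧ ‖z‖ = r)
    (reps : Finset K) (hcover : X = ⋃ b ∈ reps, closedBall b r)
    (hdisj : ∀ b ∈ reps, ∀ b' ∈ reps, b ≠ b' → r < ‖b - b'‖)
    (T : K → K) (hT : Set.MapsTo T X X)
    (C : K → ℝ) (hC1 : ∀ x ∈ X, 1 ≤ C x)
    (hscal : ∀ x ∈ X, ∀ y ∈ X, ‖x - y‖ ≤ r → ‖T x - T y‖ = C x * ‖x - y‖)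
    (A : K → K → ℝ)
    (hA : ∀ i j : K, A i j =
      if closedBall i r ∩ T ⁻¹' (closedBall j r) = ∅ then 0
      else (μ (closedBall (0 : K) (1 / C i))).toReal) :
    ∀ i ∈ reps, ∑ j ∈ reps, A i j = 1 :=
  stmt5_general μ hμ1 X r hr reps hcover hdisj T hT C hC1 hscal A hA
end

section
/- Let K, X, T, r, H, A be as follows: T : X → X a locally scaling transformation for radius r on compact-open X ⊆ K with associated transition matrix A on H = X/B_r(0). Then T is measure-preserving (for the restriction of Haar measure to X) if and only if every column of A sums to 1, i.e., for each j ∈ H, the sum over i ∈ H of A(i,j) equals 1. -/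
/-!
On each ball `closedBall i r` the map `T` scales all distances by the single factor
`C i = ‖u‖`, `u : Kˣ`. Hence the part of `closedBall i r` that `T` sends into a ball
`closedBall a s` with `s ≤ r` is either empty or a ball of radius `s / C i`, of measure
`Δ(u⁻¹) * μ (closedBall 0 s)` with `Δ` the distributive Haar character. Comparing with the part
sent into the ball `closedBall j r ∋ a` shows that, when the column sums are `1`,
`μ (X ∩ T⁻¹' B) ≤ μ B` for every ball `B` of radius `s ≤ r` in `X`. As `closedBall j r` is a
finite disjoint union of such balls and both sides have the same total on it, equality holds on
each of them. These balls form a π-system generating the Borel σ-algebra, so the push-forward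
of `μ.restrict X` by `T` is `μ.restrict X`.
-/

open Metric MeasureTheory Set
open scoped ENNReal Pointwise

namespace IsUltrametricDist

section

variable {M : Type*} [PseudoMetricSpace M] [IsUltrametricDist M]

theorem isPiSystem_closedBall (r : ℝ) :
    IsPiSystem {E : Set M | ∃ a s, 0 < s ∧ s ≤ r ∧ E = closedBall a s} := by
  rintro _ ⟨a, s, hs, hsr, rfl⟩ _ ⟨b, t, ht, htr, rfl⟩ hne
  rcases closedBall_subset_trichotomy a b s t with h | h | h
  · exact ⟨a, s, hs, hsr, inter_eq_left.mpr h⟩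
  · exact ⟨b, t, ht, htr, inter_eq_right.mpr h⟩
  · exact absurd h (not_disjoint_iff_nonempty_inter.mpr hne)

theorem isTopologicalBasis_closedBall {r : ℝ} (hr : 0 < r) :
    TopologicalSpace.IsTopologicalBasis
      {E : Set M | ∃ a s, 0 < s ∧ s ≤ r ∧ E = closedBall a s} := by
  refine TopologicalSpace.isTopologicalBasis_of_isOpen_of_nhds ?_ fun x U hx hU ↦ ?_
  · rintro _ ⟨a, s, hs, -, rfl⟩
    exact isOpen_closedBall a hs.ne'
  · obtain ⟨ε, hε, hεU⟩ := Metric.isOpen_iff.mp hU x hx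
    have hs : 0 < min (ε / 2) r := lt_min (half_pos hε) hr
    refine ⟨closedBall x (min (ε / 2) r), ⟨x, _, hs, min_le_right _ _, rfl⟩,
      mem_closedBall_self hs.le, (closedBall_subset_ball ?_).trans hεU⟩
    exact (min_le_left _ _).trans_lt (half_lt_self hε)

theorem finite_image_closedBall {k : Set M} (hk : IsCompact k) {s : ℝ} (hs : 0 < s) :
    ((closedBall · s) '' k).Finite := by
  obtain ⟨t, -, ht, hkt⟩ := hk.elim_finite_subcover_image
    (fun a _ ↦ isOpen_closedBall a hs.ne') fun a ha ↦ mem_biUnion ha (mem_closedBall_self hs.le)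
  refine (ht.image (closedBall · s)).subset ?_
  rintro _ ⟨a, ha, rfl⟩
  obtain ⟨b, hb, hab⟩ := mem_iUnion₂.mp (hkt ha)
  exact ⟨b, hb, closedBall_eq_of_mem hab⟩

theorem closedBall_inter_preimage_closedBall {N : Type*} [PseudoMetricSpace N]
    [IsUltrametricDist N] {T : M → N} {c r s : ℝ} {i x : M} {a : N} (hc : 0 < c)
    (hT : ∀ x ∈ closedBall i r, ∀ y ∈ closedBall i r, dist (T x) (T y) = c * dist x y)
    (hsr : s / c ≤ r) (hx : x ∈ closedBall i r) (hTx : T x ∈ closedBall a s) :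
    closedBall i r ∩ T ⁻¹' closedBall a s = closedBall x (s / c) := by
  have hx' : x ∈ closedBall x r := mem_closedBall_self (dist_nonneg.trans hx)
  rw [closedBall_eq_of_mem hx] at hT ⊢
  rw [closedBall_eq_of_mem hTx]
  ext y
  simp only [mem_inter_iff, mem_preimage, mem_closedBall, le_div_iff₀' hc]
  constructor
  · rintro ⟨hy, hTy⟩
    rwa [hT y hy x hx'] at hTy
  · intro hy
    have hyr : y ∈ closedBall x r := (le_div_iff₀' hc).mpr hy |>.trans hsr
    exact ⟨hyr, (hT y hyr x hx').trans_le hy⟩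

end

theorem dist_map_eq_mul_center {E F : Type*} [MetricSpace E] [IsUltrametricDist E]
    [PseudoMetricSpace F] {T : E → F} {C : E → ℝ} {i : E} {r : ℝ}
    (hT : ∀ x ∈ closedBall i r, ∀ y ∈ closedBall i r, dist x y ≤ r →
      dist (T x) (T y) = C x * dist x y) {x y : E}
    (hx : x ∈ closedBall i r) (hy : y ∈ closedBall i r) :
    dist (T x) (T y) = C i * dist x y := by
  have hi : i ∈ closedBall i r := mem_closedBall_self (dist_nonneg.trans hx)
  have hCx : C x = C i := by
    rcases eq_or_ne x i with rfl | hxi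
    · rfl
    refine mul_right_cancel₀ (dist_ne_zero.mpr hxi) ?_
    rw [← hT x hx i hi hx, dist_comm, hT i hi x hx (dist_comm x i ▸ hx), dist_comm]
  have hxy : dist x y ≤ r := (dist_triangle_max x i y).trans (max_le hx (dist_comm y i ▸ hy))
  rw [hT x hx y hy hxy, hCx]

end IsUltrametricDist

theorem MeasureTheory.Measure.measure_eq_of_le_of_measure_biUnion_eq {α ι : Type*}
    [MeasurableSpace α] {μ ν : Measure α} {s : Finset ι} {f : ι → Set α}
    (hd : (s : Set ι).PairwiseDisjoint f) (hm : ∀ i ∈ s, MeasurableSet (f i))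
    (hle : ∀ i ∈ s, ν (f i) ≤ μ (f i)) (heq : ν (⋃ i ∈ s, f i) = μ (⋃ i ∈ s, f i))
    (hfin : μ (⋃ i ∈ s, f i) ≠ ∞) {i : ι} (hi : i ∈ s) : ν (f i) = μ (f i) := by
  classical
  rw [measure_biUnion_finset hd hm, measure_biUnion_finset hd hm,
    ← Finset.add_sum_erase s _ hi, ← Finset.add_sum_erase s _ hi] at heq
  rw [measure_biUnion_finset hd hm, ← Finset.add_sum_erase s _ hi] at hfin
  refine le_antisymm (hle i hi) (ENNReal.le_of_add_le_add_right (ENNReal.add_ne_top.mp hfin).2 ?_)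
  rw [← heq]
  exact add_le_add_right (Finset.sum_le_sum fun j hj ↦ hle j (Finset.mem_of_mem_erase hj)) _

theorem MeasureTheory.Measure.addHaar_closedBall_norm_mul {K : Type*} [NontriviallyNormedField K]
    [LocallyCompactSpace K] [MeasurableSpace K] [BorelSpace K] (μ : Measure K)
    [μ.IsAddHaarMeasure] [μ.Regular] (u : Kˣ) (x : K) (t : ℝ) :
    μ (closedBall x (‖(u : K)‖ * t)) = distribHaarChar K u * μ (closedBall 0 t) := by
  rw [addHaar_closedBall_center, distribHaarChar_mul, Units.smul_def, smul_closedBall' u.ne_zero,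
    smul_zero]

section LocallyScaling

variable {K : Type*} [NontriviallyNormedField K]

-- `reps` holds one centre of each `r`-ball of `X`; the transition matrix is indexed by them.
structure IsLocallyScaling (X : Set K) (r : ℝ) (reps : Finset K) (T : K → K) (C : K → ℝ) :
    Prop where
  exists_norm_eq : ∃ z : K, z ≠ 0 ∧ ‖z‖ = r
  eq_biUnion : X = ⋃ b ∈ reps, closedBall b r
  lt_norm_sub : ∀ b ∈ reps, ∀ b' ∈ reps, b ≠ b' → r < ‖b - b'‖
  mapsTo : MapsTo T X X
  one_le : ∀ x ∈ X, 1 ≤ C x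
  norm_sub_eq : ∀ x ∈ X, ∀ y ∈ X, ‖x - y‖ ≤ r → ‖T x - T y‖ = C x * ‖x - y‖

noncomputable def transitionMatrix [MeasurableSpace K] (μ : Measure K) (r : ℝ) (T : K → K)
    (i j : K) : ℝ :=
  (μ (closedBall i r ∩ T ⁻¹' closedBall j r)).toReal / (μ (closedBall (0 : K) r)).toReal

namespace IsLocallyScaling

variable {X : Set K} {r : ℝ} {reps : Finset K} {T : K → K} {C : K → ℝ} {i j a : K} {s : ℝ}

theorem radius_pos (h : IsLocallyScaling X r reps T C) : 0 < r := by
  obtain ⟨z, hz, rfl⟩ := h.exists_norm_eq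
  exact norm_pos_iff.mpr hz

theorem closedBall_subset (h : IsLocallyScaling X r reps T C) (hi : i ∈ reps) :
    closedBall i r ⊆ X :=
  h.eq_biUnion ▸ subset_biUnion_of_mem (u := (closedBall · r)) hi

theorem exists_mem_closedBall (h : IsLocallyScaling X r reps T C) {x : K} (hx : x ∈ X) :
    ∃ i ∈ reps, x ∈ closedBall i r := by
  simpa [h.eq_biUnion] using hx

theorem isCompact [ProperSpace K] (h : IsLocallyScaling X r reps T C) : IsCompact X :=
  h.eq_biUnion ▸ reps.isCompact_biUnion fun b _ ↦ isCompact_closedBall b r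

theorem continuousOn (h : IsLocallyScaling X r reps T C) : ContinuousOn T X := by
  refine Metric.continuousOn_iff.mpr fun x hx ε hε ↦ ?_
  have hC : 0 < C x := one_pos.trans_le (h.one_le x hx)
  refine ⟨min r (ε / C x), lt_min h.radius_pos (div_pos hε hC), fun y hy hyx ↦ ?_⟩
  rw [dist_eq_norm, norm_sub_rev] at hyx ⊢
  rw [h.norm_sub_eq x hx y hy (hyx.le.trans (min_le_left _ _)), ← lt_div_iff₀' hC]
  exact hyx.trans_le (min_le_right _ _)

section Measure

variable [MeasurableSpace K] [BorelSpace K] [ProperSpace K] (μ : Measure K)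

theorem measurableSet (h : IsLocallyScaling X r reps T C) : MeasurableSet X :=
  h.isCompact.isClosed.measurableSet

theorem map_restrict_apply (h : IsLocallyScaling X r reps T C) {S : Set K}
    (hS : MeasurableSet S) : (μ.restrict X).map T S = μ (X ∩ T ⁻¹' S) := by
  rw [Measure.map_apply_of_aemeasurable (h.continuousOn.aemeasurable h.measurableSet) hS,
    Measure.restrict_apply' h.measurableSet, inter_comm]

end Measure

variable [IsUltrametricDist K]

theorem pairwiseDisjoint (h : IsLocallyScaling X r reps T C) :
    (reps : Set K).PairwiseDisjoint (closedBall · r) := by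
  intro b hb b' hb' hne
  refine (IsUltrametricDist.closedBall_eq_or_disjoint b b' r).resolve_left fun heq ↦ ?_
  have hb'b : b' ∈ closedBall b r := heq ▸ mem_closedBall_self h.radius_pos.le
  exact (h.lt_norm_sub b hb b' hb' hne).not_ge (by rwa [norm_sub_rev, ← dist_eq_norm])

theorem dist_map_eq_mul (h : IsLocallyScaling X r reps T C) (hi : i ∈ reps) :
    ∀ x ∈ closedBall i r, ∀ y ∈ closedBall i r, dist (T x) (T y) = C i * dist x y :=
  fun _ hx _ hy ↦ IsUltrametricDist.dist_map_eq_mul_center (fun x hx y hy hxy ↦ by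
    simpa only [dist_eq_norm] using h.norm_sub_eq x (h.closedBall_subset hi hx) y
      (h.closedBall_subset hi hy) (dist_eq_norm x y ▸ hxy)) hx hy

theorem exists_unit_norm_eq (h : IsLocallyScaling X r reps T C) (hi : i ∈ reps) :
    ∃ u : Kˣ, ‖(u : K)‖ = C i := by
  obtain ⟨z, hz, hzr⟩ := h.exists_norm_eq
  have hii : i ∈ closedBall i r := mem_closedBall_self h.radius_pos.le
  have hiz : i + z ∈ closedBall i r := by simp [hzr]
  have hC : ‖(T (i + z) - T i) / z‖ = C i := by
    rw [norm_div, ← dist_eq_norm, h.dist_map_eq_mul hi _ hiz _ hii, dist_eq_norm,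
      add_sub_cancel_left, mul_div_cancel_right₀ _ (norm_ne_zero_iff.mpr hz)]
  have hne : (T (i + z) - T i) / z ≠ 0 := by
    rw [← norm_ne_zero_iff, hC]
    exact (one_pos.trans_le (h.one_le i (h.closedBall_subset hi hii))).ne'
  exact ⟨Units.mk0 _ hne, hC⟩

theorem closedBall_subset_of_mem (h : IsLocallyScaling X r reps T C) {x : K} (hx : x ∈ X)
    (hsr : s ≤ r) : closedBall x s ⊆ X := by
  obtain ⟨i, hi, hxi⟩ := h.exists_mem_closedBall hx
  refine (closedBall_subset_closedBall hsr).trans ?_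
  rw [← IsUltrametricDist.closedBall_eq_of_mem hxi]
  exact h.closedBall_subset hi

section Measure

variable [MeasurableSpace K] [BorelSpace K] [ProperSpace K] (μ : Measure K)

theorem measure_inter_preimage_eq_sum (h : IsLocallyScaling X r reps T C) (S : Set K) :
    μ (X ∩ T ⁻¹' S) = ∑ i ∈ reps, μ (closedBall i r ∩ T ⁻¹' S) := by
  rw [← Measure.restrict_apply h.measurableSet, h.eq_biUnion,
    measure_biUnion_finset h.pairwiseDisjoint fun i _ ↦ measurableSet_closedBall]
  exact Finset.sum_congr rfl fun i _ ↦ Measure.restrict_apply measurableSet_closedBall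

variable [μ.IsAddHaarMeasure]

theorem measure_closedBall_inter_preimage_mul_le (h : IsLocallyScaling X r reps T C)
    (hi : i ∈ reps) (haj : a ∈ closedBall j r) (hs : 0 < s) (hsr : s ≤ r) :
    μ (closedBall i r ∩ T ⁻¹' closedBall a s) * μ (closedBall 0 r) ≤
      μ (closedBall i r ∩ T ⁻¹' closedBall j r) * μ (closedBall 0 s) := by
  rcases (closedBall i r ∩ T ⁻¹' closedBall a s).eq_empty_or_nonempty with hempty | ⟨x, hx, hTx⟩
  · simp [hempty]
  obtain ⟨u, hu⟩ := h.exists_unit_norm_eq hi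
  have hC : 0 < C i := hu ▸ norm_pos_iff.mpr u.ne_zero
  have hpiece : ∀ b t, 0 ≤ t → t ≤ r → T x ∈ closedBall b t →
      μ (closedBall i r ∩ T ⁻¹' closedBall b t) = distribHaarChar K u⁻¹ * μ (closedBall 0 t) := by
    intro b t ht htr hTxb
    have htC : t / C i ≤ r := (div_le_self ht (h.one_le i (h.closedBall_subset hi
      (mem_closedBall_self h.radius_pos.le)))).trans htr
    rw [IsUltrametricDist.closedBall_inter_preimage_closedBall hC (h.dist_map_eq_mul hi) htC hx
      hTxb, div_eq_inv_mul, ← hu, ← norm_inv, ← Units.val_inv_eq_inv_val,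
      Measure.addHaar_closedBall_norm_mul]
  have hTxj : T x ∈ closedBall j r := by
    rw [IsUltrametricDist.closedBall_eq_of_mem haj]
    exact closedBall_subset_closedBall hsr hTx
  rw [hpiece a s hs.le hsr hTx, hpiece j r h.radius_pos.le le_rfl hTxj, mul_right_comm]

theorem measure_inter_preimage_closedBall_le (h : IsLocallyScaling X r reps T C)
    (hj : μ (X ∩ T ⁻¹' closedBall j r) = μ (closedBall j r)) (haj : a ∈ closedBall j r)
    (hs : 0 < s) (hsr : s ≤ r) : μ (X ∩ T ⁻¹' closedBall a s) ≤ μ (closedBall a s) := by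
  rw [Measure.addHaar_closedBall_center] at hj ⊢
  refine (ENNReal.mul_le_mul_iff_left (measure_closedBall_pos μ 0 h.radius_pos).ne'
    measure_closedBall_lt_top.ne).mp ?_
  calc μ (X ∩ T ⁻¹' closedBall a s) * μ (closedBall 0 r)
      = ∑ i ∈ reps, μ (closedBall i r ∩ T ⁻¹' closedBall a s) * μ (closedBall 0 r) := by
        rw [h.measure_inter_preimage_eq_sum, Finset.sum_mul]
    _ ≤ ∑ i ∈ reps, μ (closedBall i r ∩ T ⁻¹' closedBall j r) * μ (closedBall 0 s) :=
        Finset.sum_le_sum fun i hi ↦ h.measure_closedBall_inter_preimage_mul_le μ hi haj hs hsr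
    _ = μ (closedBall 0 s) * μ (closedBall 0 r) := by
        rw [← Finset.sum_mul, ← h.measure_inter_preimage_eq_sum, hj, mul_comm]

theorem measure_inter_preimage_closedBall_eq (h : IsLocallyScaling X r reps T C)
    (hcol : ∀ j ∈ reps, μ (X ∩ T ⁻¹' closedBall j r) = μ (closedBall j r)) (ha : a ∈ X)
    (hs : 0 < s) (hsr : s ≤ r) : μ (X ∩ T ⁻¹' closedBall a s) = μ (closedBall a s) := by
  classical
  obtain ⟨j, hj, haj⟩ := h.exists_mem_closedBall ha
  set G := (IsUltrametricDist.finite_image_closedBall (isCompact_closedBall j r) hs).toFinset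
  have hG : ∀ {D}, D ∈ G ↔ ∃ b ∈ closedBall j r, closedBall b s = D := by simp [G]
  have hGj : ⋃ D ∈ G, id D = closedBall j r := by
    refine Subset.antisymm (iUnion₂_subset fun D hD ↦ ?_) fun x hx ↦
      mem_biUnion (hG.mpr ⟨x, hx, rfl⟩) (mem_closedBall_self hs.le)
    obtain ⟨b, hb, rfl⟩ := hG.mp hD
    rw [IsUltrametricDist.closedBall_eq_of_mem hb]
    exact closedBall_subset_closedBall hsr
  rw [← h.map_restrict_apply μ measurableSet_closedBall]
  refine Measure.measure_eq_of_le_of_measure_biUnion_eq (f := id) (fun D hD D' hD' hne ↦ ?_)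
    (fun D hD ↦ ?_) (fun D hD ↦ ?_) ?_ ?_ (hG.mpr ⟨a, haj, rfl⟩)
  · obtain ⟨b, -, rfl⟩ := hG.mp hD
    obtain ⟨b', -, rfl⟩ := hG.mp hD'
    exact (IsUltrametricDist.closedBall_eq_or_disjoint b b' s).resolve_left hne
  · obtain ⟨b, -, rfl⟩ := hG.mp hD
    exact measurableSet_closedBall
  · obtain ⟨b, hb, rfl⟩ := hG.mp hD
    rw [id, h.map_restrict_apply μ measurableSet_closedBall]
    exact h.measure_inter_preimage_closedBall_le μ (hcol j hj) hb hs hsr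
  · rw [hGj, h.map_restrict_apply μ measurableSet_closedBall, hcol j hj]
  · rw [hGj]
    exact measure_closedBall_lt_top.ne

theorem map_restrict_eq (h : IsLocallyScaling X r reps T C)
    (hcol : ∀ j ∈ reps, μ (X ∩ T ⁻¹' closedBall j r) = μ (closedBall j r)) :
    (μ.restrict X).map T = μ.restrict X := by
  have : IsFiniteMeasure (μ.restrict X) :=
    isFiniteMeasure_restrict.mpr h.isCompact.measure_lt_top.ne
  refine ext_of_generate_finite _ (BorelSpace.measurable_eq.trans
    (IsUltrametricDist.isTopologicalBasis_closedBall h.radius_pos).borel_eq_generateFrom)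
    (IsUltrametricDist.isPiSystem_closedBall r) ?_ ?_
  · rintro _ ⟨a, s, hs, hsr, rfl⟩
    rw [h.map_restrict_apply μ measurableSet_closedBall,
      Measure.restrict_apply measurableSet_closedBall]
    rcases (closedBall a s ∩ X).eq_empty_or_nonempty with hempty | ⟨p, hpa, hpX⟩
    · have hpre : X ∩ T ⁻¹' closedBall a s = ∅ := eq_empty_of_forall_notMem fun x hx ↦
        eq_empty_iff_forall_notMem.mp hempty (T x) ⟨hx.2, h.mapsTo hx.1⟩
      rw [hpre, hempty]
    · rw [IsUltrametricDist.closedBall_eq_of_mem hpa,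
        h.measure_inter_preimage_closedBall_eq μ hcol hpX hs hsr,
        inter_eq_left.mpr (h.closedBall_subset_of_mem hpX hsr)]
  · rw [h.map_restrict_apply μ MeasurableSet.univ, preimage_univ, inter_univ,
      Measure.restrict_apply_univ]

theorem measure_inter_preimage_eq_iff (h : IsLocallyScaling X r reps T C) :
    (∀ S ⊆ X, MeasurableSet S → μ (X ∩ T ⁻¹' S) = μ S) ↔
      ∀ j ∈ reps, μ (X ∩ T ⁻¹' closedBall j r) = μ (closedBall j r) := by
  refine ⟨fun hS j hj ↦ hS _ (h.closedBall_subset hj) measurableSet_closedBall,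
    fun hcol S hSX hS ↦ ?_⟩
  rw [← h.map_restrict_apply μ hS, h.map_restrict_eq μ hcol, Measure.restrict_apply hS,
    inter_eq_left.mpr hSX]

theorem sum_transitionMatrix_eq_one_iff (h : IsLocallyScaling X r reps T C) :
    ∑ i ∈ reps, transitionMatrix μ r T i j = 1 ↔
      μ (X ∩ T ⁻¹' closedBall j r) = μ (closedBall j r) := by
  have hρ : μ (closedBall (0 : K) r) ≠ ∞ := measure_closedBall_lt_top.ne
  have hX : μ (X ∩ T ⁻¹' closedBall j r) ≠ ∞ :=
    (measure_mono inter_subset_left).trans_lt h.isCompact.measure_lt_top |>.ne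
  have hρ₀ : (μ (closedBall (0 : K) r)).toReal ≠ 0 :=
    ENNReal.toReal_ne_zero.mpr ⟨(measure_closedBall_pos μ 0 h.radius_pos).ne', hρ⟩
  simp only [transitionMatrix]
  rw [← Finset.sum_div, ← ENNReal.toReal_sum fun i _ ↦
      ((measure_mono inter_subset_left).trans_lt measure_closedBall_lt_top).ne,
    ← h.measure_inter_preimage_eq_sum, div_eq_one_iff_eq hρ₀,
    Measure.addHaar_closedBall_center μ j, ENNReal.toReal_eq_toReal_iff' hX hρ]

end Measure

end IsLocallyScaling

end LocallyScaling

theorem stmt6_general {K : Type*} [NontriviallyNormedField K] [IsUltrametricDist K]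
    [ProperSpace K]
    [MeasurableSpace K] [BorelSpace K] (μ : Measure K) [μ.IsAddHaarMeasure]
    (X : Set K) (r : ℝ) (hr : ∃ z : K, z ≠ 0 ∧ ‖z‖ = r)
    (reps : Finset K) (hcover : X = ⋃ b ∈ reps, closedBall b r)
    (hdisj : ∀ b ∈ reps, ∀ b' ∈ reps, b ≠ b' → r < ‖b - b'‖)
    (T : K → K) (hT : Set.MapsTo T X X)
    (C : K → ℝ) (hC1 : ∀ x ∈ X, 1 ≤ C x)
    (hscal : ∀ x ∈ X, ∀ y ∈ X, ‖x - y‖ ≤ r → ‖T x - T y‖ = C x * ‖x - y‖)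
    (A : K → K → ℝ)
    (hA : ∀ i j : K, A i j =
      (μ (closedBall i r ∩ T ⁻¹' (closedBall j r))).toReal
        / (μ (closedBall (0 : K) r)).toReal) :
    (∀ S ⊆ X, MeasurableSet S → μ (X ∩ T ⁻¹' S) = μ S) ↔
      (∀ j ∈ reps, ∑ i ∈ reps, A i j = 1) := by
  have h : IsLocallyScaling X r reps T C := ⟨hr, hcover, hdisj, hT, hC1, hscal⟩
  obtain rfl : A = transitionMatrix μ r T := funext₂ hA
  rw [h.measure_inter_preimage_eq_iff μ]
  exact forall₂_congr fun j _ ↦ (h.sum_transitionMatrix_eq_one_iff μ).symm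

/-- A locally scaling transformation `T` on a compact-open `X` is
measure-preserving (for the restriction of Haar measure to `X`) if and only if every
column of its associated transition matrix sums to 1. -/
theorem stmt6 {K : Type*} [NontriviallyNormedField K] [IsUltrametricDist K]
    [CompleteSpace K] [ProperSpace K]
    [MeasurableSpace K] [BorelSpace K] (μ : Measure K) [μ.IsAddHaarMeasure]
    (hμ1 : μ (closedBall (0 : K) 1) = 1)
    (X : Set K) (r : ℝ) (hr : ∃ z : K, z ≠ 0 ∧ ‖z‖ = r)
    (reps : Finset K) (hcover : X = ⋃ b ∈ reps, closedBall b r)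
    (hdisj : ∀ b ∈ reps, ∀ b' ∈ reps, b ≠ b' → r < ‖b - b'‖)
    (T : K → K) (hT : Set.MapsTo T X X)
    (C : K → ℝ) (hC1 : ∀ x ∈ X, 1 ≤ C x)
    (hscal : ∀ x ∈ X, ∀ y ∈ X, ‖x - y‖ ≤ r → ‖T x - T y‖ = C x * ‖x - y‖)
    (A : K → K → ℝ)
    (hA : ∀ i j : K, A i j =
      (μ (closedBall i r ∩ T ⁻¹' (closedBall j r))).toReal
        / (μ (closedBall (0 : K) r)).toReal) :
    (∀ S ⊆ X, MeasurableSet S → μ (X ∩ T ⁻¹' S) = μ S) ↔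
      (∀ j ∈ reps, ∑ i ∈ reps, A i j = 1) :=
  stmt6_general μ X r hr reps hcover hdisj T hT C hC1 hscal A hA
end

section
/- Let {u_k} be a very well distributed, well ordered (T.B.R.B.O.) sequence in the ring of integers O of a non-archimedean local field with residue field of cardinality q, and let Q_k(x) = Π_{i<k}(x−u_i) / Π_{i<k}(u_k−u_i) be the corresponding interpolating polynomials. Then for every k ≥ 1, Q_k maps O into O and Q_k is κ_k-Lipschitz on O, where κ_k = |π|^{−⌊log_q k⌋} and π is a uniformizer. -/
/-!
Let `R = ⌊log_q k⌋` and `D = ∑_{s=1}^{R} ⌊k / q^s⌋`. As the norms of nonzero elements of `O` are the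
powers `‖π‖^n`, `n ≥ 0`, the norm of a product of nonzero elements of `O` is `‖π‖` raised to the
number of pairs (factor, `s ≥ 1`) with the factor in `π^s O`; counting only `s ≤ R` gives an upper
bound, and an equality when no factor lies in `π^(R+1) O`. Very good distribution puts exactly
`⌊k / q^s⌋` of `u_0, …, u_(k-1)` in the ball of radius `‖π‖^s` about `u_k`, and at least that many
in every ball of radius `‖π‖^s` centred in `O`: so the denominator of `Q_k` has norm `‖π‖^D` and the
numerator at `x ∈ O` norm at most `‖π‖^D`. For the Lipschitz bound, `∏ (x - u_j) - ∏ (y - u_j)` is a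
sum of terms `(x - y) ∏_(j<i) (y - u_j) ∏_(i<j<k) (x - u_j)`; since at most `⌊i / q^s⌋ + 1` of
`u_0, …, u_i` lie in a ball of radius `‖π‖^s`, each level `s ≤ R` loses at most one factor, and
every term has norm at most `‖π‖^(D - R) ‖x - y‖`.
-/

open Finset

section DiscreteNorm

variable {K : Type*} [NormedField K] {π : K}

lemma exists_norm_eq_pow_of_norm_le_one (hπ0 : π ≠ 0) (hπ1 : ‖π‖ < 1)
    (hπuni : ∀ x : K, x ≠ 0 → ∃ n : ℤ, ‖x‖ = ‖π‖ ^ n) {z : K} (hz0 : z ≠ 0) (hz1 : ‖z‖ ≤ 1) :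
    ∃ n : ℕ, ‖z‖ = ‖π‖ ^ n := by
  obtain ⟨n, hn⟩ := hπuni z hz0
  have hn0 : 0 ≤ n := by
    rwa [hn, zpow_le_one_iff_right_of_lt_one₀ (norm_pos_iff.2 hπ0) hπ1] at hz1
  lift n to ℕ using hn0
  exact ⟨n, by rwa [zpow_natCast] at hn⟩

lemma card_filter_range_pow_le_pow {c : ℝ} (hc0 : 0 < c) (hc1 : c < 1) (n N : ℕ) :
    #{r ∈ range N | c ^ n ≤ c ^ (r + 1)} = min n N := by
  rw [← card_range (min n N)]
  congr 1
  ext r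
  simp only [mem_filter, mem_range, pow_le_pow_iff_right_of_lt_one₀ hc0 hc1]
  omega

lemma sum_card_filter_norm_le_pow_eq_sum_min (hπ0 : π ≠ 0) (hπ1 : ‖π‖ < 1) {ι : Type*}
    {S : Finset ι} {z : ι → K} {n : ι → ℕ} (hn : ∀ i ∈ S, ‖z i‖ = ‖π‖ ^ n i) (N : ℕ) :
    ∑ r ∈ range N, #{i ∈ S | ‖z i‖ ≤ ‖π‖ ^ (r + 1)} = ∑ i ∈ S, min (n i) N := by
  refine (sum_card_bipartiteAbove_eq_sum_card_bipartiteBelow _).trans (sum_congr rfl fun i hi => ?_)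
  rw [← card_filter_range_pow_le_pow (norm_pos_iff.2 hπ0) hπ1, ← hn i hi]
  rfl

lemma norm_prod_le_pow_sum_card (hπ0 : π ≠ 0) (hπ1 : ‖π‖ < 1)
    (hπuni : ∀ x : K, x ≠ 0 → ∃ n : ℤ, ‖x‖ = ‖π‖ ^ n) {ι : Type*} (S : Finset ι) (z : ι → K)
    (hz : ∀ i ∈ S, ‖z i‖ ≤ 1) (N : ℕ) :
    ‖∏ i ∈ S, z i‖ ≤ ‖π‖ ^ ∑ r ∈ range N, #{i ∈ S | ‖z i‖ ≤ ‖π‖ ^ (r + 1)} := by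
  by_cases h0 : ∃ i ∈ S, z i = 0
  · obtain ⟨i, hi, hzi⟩ := h0
    rw [prod_eq_zero hi hzi, norm_zero]
    positivity
  push Not at h0
  choose! n hn using fun i hi ↦
    exists_norm_eq_pow_of_norm_le_one hπ0 hπ1 hπuni (h0 i hi) (hz i hi)
  rw [sum_card_filter_norm_le_pow_eq_sum_min hπ0 hπ1 hn, norm_prod, prod_congr rfl hn,
    prod_pow_eq_pow_sum]
  exact pow_le_pow_of_le_one (norm_nonneg _) hπ1.le (sum_le_sum fun i _ ↦ min_le_left _ _)

lemma norm_prod_eq_pow_sum_card (hπ0 : π ≠ 0) (hπ1 : ‖π‖ < 1)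
    (hπuni : ∀ x : K, x ≠ 0 → ∃ n : ℤ, ‖x‖ = ‖π‖ ^ n) {ι : Type*} (S : Finset ι) (z : ι → K)
    (hz : ∀ i ∈ S, ‖z i‖ ≤ 1) (N : ℕ) (hN : #{i ∈ S | ‖z i‖ ≤ ‖π‖ ^ (N + 1)} = 0) :
    ‖∏ i ∈ S, z i‖ = ‖π‖ ^ ∑ r ∈ range N, #{i ∈ S | ‖z i‖ ≤ ‖π‖ ^ (r + 1)} := by
  have hlt : ∀ i ∈ S, ‖π‖ ^ (N + 1) < ‖z i‖ := by
    simpa only [card_eq_zero, filter_eq_empty_iff, not_le] using hN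
  choose! n hn using fun i hi ↦ exists_norm_eq_pow_of_norm_le_one hπ0 hπ1 hπuni
    (norm_pos_iff.1 ((pow_nonneg (norm_nonneg π) _).trans_lt (hlt i hi))) (hz i hi)
  rw [sum_card_filter_norm_le_pow_eq_sum_min hπ0 hπ1 hn, norm_prod, prod_congr rfl hn,
    prod_pow_eq_pow_sum]
  refine congrArg _ (sum_congr rfl fun i hi ↦ (min_eq_left ?_).symm)
  have h := hlt i hi
  rw [hn i hi, pow_lt_pow_iff_right_of_lt_one₀ (norm_pos_iff.2 hπ0) hπ1] at h
  omega

end DiscreteNorm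

lemma norm_sub_le_one {K : Type*} [SeminormedAddGroup K] [IsUltrametricDist K] {x y : K}
    (hx : ‖x‖ ≤ 1) (hy : ‖y‖ ≤ 1) : ‖x - y‖ ≤ 1 := by
  rw [sub_eq_add_neg]
  exact (IsUltrametricDist.norm_add_le_max _ _).trans (max_le hx ((norm_neg y).trans_le hy))

section WellDistributed

variable {K : Type*} [NormedField K]

def IsVeryWellDistributed (q : ℕ) (π : K) (u : ℕ → K) : Prop :=
  ∀ (k : ℕ) (c : K), ‖c‖ ≤ 1 → ∀ m : ℕ, 1 ≤ m →
    #{i ∈ range (m * q ^ k) | ‖u i - c‖ ≤ ‖π‖ ^ k} = m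

namespace IsVeryWellDistributed

variable {q : ℕ} {π : K} {u : ℕ → K}

lemma div_pow_le_card_filter (hu : IsVeryWellDistributed q π u) {c : K} (hc : ‖c‖ ≤ 1)
    (n s : ℕ) : n / q ^ s ≤ #{i ∈ range n | ‖c - u i‖ ≤ ‖π‖ ^ s} := by
  simp_rw [norm_sub_rev c]
  rcases Nat.eq_zero_or_pos (n / q ^ s) with h | h
  · omega
  rw [← hu s c hc _ h]
  exact card_le_card (filter_subset_filter _ (range_subset_range.2 (Nat.div_mul_le_self n _)))

lemma card_filter_range_succ_le (hu : IsVeryWellDistributed q π u) (hq : 0 < q) {c : K}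
    (hc : ‖c‖ ≤ 1) (n s : ℕ) : #{i ∈ range (n + 1) | ‖c - u i‖ ≤ ‖π‖ ^ s} ≤ n / q ^ s + 1 := by
  simp_rw [norm_sub_rev c]
  rw [← hu s c hc (n / q ^ s + 1) (Nat.le_add_left 1 _)]
  refine card_le_card (filter_subset_filter _ (range_subset_range.2 ?_))
  have := Nat.lt_div_mul_add (a := n) (pow_pos hq s)
  rw [add_mul, one_mul]
  omega

lemma card_filter_sub_eq_div (hu : IsVeryWellDistributed q π u) (hq : 0 < q) {k : ℕ}
    (hk : ‖u k‖ ≤ 1) (s : ℕ) : #{i ∈ range k | ‖u k - u i‖ ≤ ‖π‖ ^ s} = k / q ^ s := by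
  refine le_antisymm ?_ (hu.div_pow_le_card_filter hk k s)
  have h := hu.card_filter_range_succ_le hq hk k s
  rwa [range_add_one, filter_insert, if_pos (by simp), card_insert_of_notMem (by simp),
    Nat.add_le_add_iff_right] at h

lemma div_pow_le_card_filter_lt_add_card_filter_gt (hu : IsVeryWellDistributed q π u)
    (hq : 0 < q) {x y : K} (hx : ‖x‖ ≤ 1) (hy : ‖y‖ ≤ 1) {i k : ℕ} (hik : i ≤ k) (s : ℕ) :
    k / q ^ s ≤ #{j ∈ {j ∈ range k | j < i} | ‖y - u j‖ ≤ ‖π‖ ^ s}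
      + #{j ∈ {j ∈ range k | i < j} | ‖x - u j‖ ≤ ‖π‖ ^ s} + 1 := by
  have hbefore : i / q ^ s ≤ #{j ∈ {j ∈ range k | j < i} | ‖y - u j‖ ≤ ‖π‖ ^ s} := by
    refine (hu.div_pow_le_card_filter hy i s).trans (card_le_card (filter_subset_filter _ ?_))
    intro j hj
    simp only [mem_filter, mem_range] at hj ⊢
    omega
  have hsplit : #{j ∈ range k | ‖x - u j‖ ≤ ‖π‖ ^ s} ≤ #{j ∈ range (i + 1) | ‖x - u j‖ ≤ ‖π‖ ^ s}
      + #{j ∈ {j ∈ range k | i < j} | ‖x - u j‖ ≤ ‖π‖ ^ s} := by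
    refine (card_le_card fun j hj ↦ ?_).trans (card_union_le _ _)
    simp only [mem_union, mem_filter, mem_range] at hj ⊢
    rcases le_or_gt j i with hji | hji
    · exact Or.inl ⟨by omega, hj.2⟩
    · exact Or.inr ⟨⟨hj.1, hji⟩, hj.2⟩
  have hall := hu.div_pow_le_card_filter hx k s
  have hprefix := hu.card_filter_range_succ_le hq hx i s
  omega

end IsVeryWellDistributed

end WellDistributed

/-- Legendre's sum `∑_{s ≥ 1} ⌊k / q^s⌋`, whose terms vanish beyond `s = ⌊log_q k⌋`. -/
def legendreSum (q k : ℕ) : ℕ :=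
  ∑ r ∈ range (Nat.log q k), k / q ^ (r + 1)

section Interpolation

variable {K : Type*} [NormedField K] [IsUltrametricDist K] {q : ℕ} {π : K} {u : ℕ → K}

lemma norm_prod_range_sub_le (hπ0 : π ≠ 0) (hπ1 : ‖π‖ < 1)
    (hπuni : ∀ x : K, x ≠ 0 → ∃ n : ℤ, ‖x‖ = ‖π‖ ^ n) (hu : IsVeryWellDistributed q π u)
    (hu1 : ∀ k, ‖u k‖ ≤ 1) {x : K} (hx : ‖x‖ ≤ 1) (k : ℕ) :
    ‖∏ i ∈ range k, (x - u i)‖ ≤ ‖π‖ ^ legendreSum q k :=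
  (norm_prod_le_pow_sum_card hπ0 hπ1 hπuni _ _ (fun i _ ↦ norm_sub_le_one hx (hu1 i)) _).trans
    (pow_le_pow_of_le_one (norm_nonneg _) hπ1.le
      (sum_le_sum fun r _ ↦ hu.div_pow_le_card_filter hx k (r + 1)))

lemma norm_prod_range_sub_eq (hπ0 : π ≠ 0) (hπ1 : ‖π‖ < 1)
    (hπuni : ∀ x : K, x ≠ 0 → ∃ n : ℤ, ‖x‖ = ‖π‖ ^ n) (hu : IsVeryWellDistributed q π u)
    (hu1 : ∀ k, ‖u k‖ ≤ 1) (hq : 1 < q) (k : ℕ) :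
    ‖∏ i ∈ range k, (u k - u i)‖ = ‖π‖ ^ legendreSum q k := by
  have hcard := hu.card_filter_sub_eq_div (zero_lt_one.trans hq) (hu1 k)
  rw [norm_prod_eq_pow_sum_card hπ0 hπ1 hπuni _ _ (fun i _ ↦ norm_sub_le_one (hu1 k) (hu1 i))
    (Nat.log q k) ((hcard _).trans (Nat.div_eq_of_lt (Nat.lt_pow_succ_log_self hq k)))]
  simp only [hcard, legendreSum]

lemma pow_log_mul_norm_prod_range_sub_sub_le (hπ0 : π ≠ 0) (hπ1 : ‖π‖ < 1)
    (hπuni : ∀ x : K, x ≠ 0 → ∃ n : ℤ, ‖x‖ = ‖π‖ ^ n) (hu : IsVeryWellDistributed q π u)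
    (hu1 : ∀ k, ‖u k‖ ≤ 1) (hq : 0 < q) {x y : K} (hx : ‖x‖ ≤ 1) (hy : ‖y‖ ≤ 1) (k : ℕ) :
    ‖π‖ ^ Nat.log q k * ‖∏ i ∈ range k, (x - u i) - ∏ i ∈ range k, (y - u i)‖
      ≤ ‖π‖ ^ legendreSum q k * ‖x - y‖ := by
  have hπpos : 0 < ‖π‖ := norm_pos_iff.2 hπ0
  have htelescope : ∏ i ∈ range k, (x - u i) - ∏ i ∈ range k, (y - u i) = ∑ i ∈ range k,
      (x - y) * ((∏ j ∈ range k with j < i, (y - u j)) * ∏ j ∈ range k with i < j, (x - u j)) := by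
    have h := prod_sub_ordered (range k) (fun i ↦ x - u i) fun _ ↦ x - y
    simp only [sub_sub_sub_cancel_left] at h
    rw [h, sub_sub_cancel]
    exact sum_congr rfl fun i _ ↦ mul_assoc _ _ _
  rw [htelescope, ← le_div_iff₀' (by positivity)]
  refine IsUltrametricDist.norm_sum_le_of_forall_le_of_nonneg (by positivity) fun i hi ↦ ?_
  rw [le_div_iff₀' (by positivity), norm_mul, norm_mul, mul_left_comm, mul_comm _ ‖x - y‖]
  gcongr
  set R := Nat.log q k
  have hbefore := norm_prod_le_pow_sum_card hπ0 hπ1 hπuni {j ∈ range k | j < i} (fun j ↦ y - u j)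
    (fun j _ ↦ norm_sub_le_one hy (hu1 j)) R
  have hafter := norm_prod_le_pow_sum_card hπ0 hπ1 hπuni {j ∈ range k | i < j} (fun j ↦ x - u j)
    (fun j _ ↦ norm_sub_le_one hx (hu1 j)) R
  set a := ∑ r ∈ range R, #{j ∈ {j ∈ range k | j < i} | ‖y - u j‖ ≤ ‖π‖ ^ (r + 1)}
  set b := ∑ r ∈ range R, #{j ∈ {j ∈ range k | i < j} | ‖x - u j‖ ≤ ‖π‖ ^ (r + 1)}
  have hcount : legendreSum q k ≤ R + a + b := by
    have := sum_le_sum fun r (_ : r ∈ range R) ↦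
      hu.div_pow_le_card_filter_lt_add_card_filter_gt hq hx hy (mem_range.1 hi).le (r + 1)
    simp only [sum_add_distrib, sum_const, card_range, smul_eq_mul, mul_one] at this
    change ∑ r ∈ range R, k / q ^ (r + 1) ≤ R + a + b
    omega
  calc ‖π‖ ^ R * (‖∏ j ∈ range k with j < i, (y - u j)‖ * ‖∏ j ∈ range k with i < j, (x - u j)‖)
      ≤ ‖π‖ ^ R * (‖π‖ ^ a * ‖π‖ ^ b) := by gcongr
    _ = ‖π‖ ^ (R + a + b) := by ring
    _ ≤ ‖π‖ ^ legendreSum q k := pow_le_pow_of_le_one hπpos.le hπ1.le hcount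

end Interpolation

theorem stmt10_general {K : Type*} [NontriviallyNormedField K] [IsUltrametricDist K]
    (q : ℕ) (hq : 1 < q) (π : K) (hπ0 : π ≠ 0) (hπ1 : ‖π‖ < 1)
    (hπuni : ∀ x : K, x ≠ 0 → ∃ n : ℤ, ‖x‖ = ‖π‖ ^ n)
    (u : ℕ → K) (hu1 : ∀ k, ‖u k‖ ≤ 1)
    (hwd : ∀ (k : ℕ) (c : K), ‖c‖ ≤ 1 → ∀ m : ℕ, 1 ≤ m →
      ((Finset.range (m * q ^ k)).filter fun i => ‖u i - c‖ ≤ ‖π‖ ^ k).card = m)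
    (Q : ℕ → K → K)
    (hQ : ∀ (k : ℕ) (x : K), Q k x =
      (∏ i ∈ Finset.range k, (x - u i)) / (∏ i ∈ Finset.range k, (u k - u i))) :
    ∀ k : ℕ, 1 ≤ k →
      (∀ x : K, ‖x‖ ≤ 1 → ‖Q k x‖ ≤ 1) ∧
      (∀ x y : K, ‖x‖ ≤ 1 → ‖y‖ ≤ 1 →
        ‖Q k x - Q k y‖ ≤ (‖π‖ ^ Nat.log q k)⁻¹ * ‖x - y‖) := by
  intro k _
  have hu : IsVeryWellDistributed q π u := hwd
  have hπpos : 0 < ‖π‖ := norm_pos_iff.2 hπ0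
  have hden := norm_prod_range_sub_eq hπ0 hπ1 hπuni hu hu1 hq k
  refine ⟨fun x hx ↦ ?_, fun x y hx hy ↦ ?_⟩
  · rw [hQ, norm_div, hden, div_le_one (by positivity)]
    exact norm_prod_range_sub_le hπ0 hπ1 hπuni hu hu1 hx k
  · have hdiff := pow_log_mul_norm_prod_range_sub_sub_le hπ0 hπ1 hπuni hu hu1
      (zero_lt_one.trans hq) hx hy k
    rw [hQ, hQ, div_sub_div_same, norm_div, hden, div_le_iff₀ (by positivity),
      inv_mul_eq_div, mul_comm, ← mul_div_assoc, le_div_iff₀' (by positivity)]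
    exact hdiff

/-- For a very well distributed, well ordered (T.B.R.B.O.) sequence
`u` in the ring of integers `O = {‖x‖ ≤ 1}` of a non-archimedean local field with
residue field of size `q` and uniformizer `π`, the interpolating polynomials
`Q_k(x) = ∏_{i<k}(x-uᵢ)/∏_{i<k}(u_k-uᵢ)` map `O` into `O` and are
`κ_k`-Lipschitz on `O`, where `κ_k = ‖π‖^{-⌊log_q k⌋}`. -/
theorem stmt10 {K : Type*} [NontriviallyNormedField K] [IsUltrametricDist K]
    [CompleteSpace K] [ProperSpace K]
    (q : ℕ) (hq : 1 < q) (π : K) (hπ0 : π ≠ 0) (hπ1 : ‖π‖ < 1)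
    (hπuni : ∀ x : K, x ≠ 0 → ∃ n : ℤ, ‖x‖ = ‖π‖ ^ n)
    (u : ℕ → K) (hu1 : ∀ k, ‖u k‖ ≤ 1)
    (hwd : ∀ (k : ℕ) (c : K), ‖c‖ ≤ 1 → ∀ m : ℕ, 1 ≤ m →
      ((Finset.range (m * q ^ k)).filter fun i => ‖u i - c‖ ≤ ‖π‖ ^ k).card = m)
    (hwo : ∀ n m : ℕ, n < m → ‖u m - u n‖ = ‖π‖ ^ (padicValNat q (m - n)))
    (Q : ℕ → K → K)
    (hQ : ∀ (k : ℕ) (x : K), Q k x =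
      (∏ i ∈ Finset.range k, (x - u i)) / (∏ i ∈ Finset.range k, (u k - u i))) :
    ∀ k : ℕ, 1 ≤ k →
      (∀ x : K, ‖x‖ ≤ 1 → ‖Q k x‖ ≤ 1) ∧
      (∀ x y : K, ‖x‖ ≤ 1 → ‖y‖ ≤ 1 →
        ‖Q k x - Q k y‖ ≤ (‖π‖ ^ Nat.log q k)⁻¹ * ‖x - y‖) :=
  stmt10_general q hq π hπ0 hπ1 hπuni u hu1 hwd Q hQ
end

section
/- Let {u_k} be a T.B.R.B.O. sequence in O with interpolating polynomials Q_k as above, and suppose k = q^ℓ for some ℓ ≥ 0. Then |Q_k(x) − Q_k(y)| = κ_k·|x−y| for all x, y ∈ O with |x−y| ≤ 1/κ_k, where κ_k = |π|^{−ℓ}. -/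
/-!
Let `k = q ^ ℓ` and `P = ∏_{i<k} (X - u_i)`, so that `Q_k = P / P(u_k)`. The first `k` terms
meet every ball of radius `|π|^m` (`m ≤ ℓ`) in exactly `q^(ℓ-m)` points, in particular every
ball of radius `|π|^ℓ` in exactly one. Counting layer by layer, the distances from any `c ∈ O`
to the `k - 1` terms outside its own `|π|^ℓ`-ball therefore multiply to the same value `|π|^S`.
For `c = u_k` the remaining distance is exactly `|π|^ℓ` by well-orderedness, so
`|P(u_k)| = |π|^(ℓ+S)`. For `x, y` in one `|π|^ℓ`-ball around `u_j`, the factors `x - u_i`,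
`i ≠ j`, are at least `|π|^(ℓ-1)` in norm, and then `P(x) - P(y)` equals
`(x - y) ∏_{i≠j} (y - u_i)` up to an error that is smaller by a factor `|π|`; hence
`|P(x) - P(y)| = |x - y| |π|^S`.
-/

open Finset

namespace IsUltrametricDist

section Group

variable {S : Type*} [SeminormedAddGroup S] [IsUltrametricDist S]

lemma norm_sub_le_max (a b : S) : ‖a - b‖ ≤ max ‖a‖ ‖b‖ := by
  simpa only [sub_eq_add_neg, norm_neg] using norm_add_le_max a (-b)

lemma norm_add_eq_right_of_norm_lt {a b : S} (h : ‖a‖ < ‖b‖) : ‖a + b‖ = ‖b‖ := by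
  rw [norm_add_eq_max_of_norm_ne_norm h.ne, max_eq_right h.le]

end Group

variable {K : Type*} [NormedField K] [IsUltrametricDist K]

lemma norm_prod_sub_prod_le {ι : Type*} {s : Finset ι} {a b : ι → K} {δ : ℝ} (hδ : 0 ≤ δ)
    (hb : ∀ i ∈ s, ‖b i‖ ≤ ‖a i‖) (hab : ∀ i ∈ s, ‖a i - b i‖ ≤ δ * ‖a i‖) :
    ‖∏ i ∈ s, a i - ∏ i ∈ s, b i‖ ≤ δ * ∏ i ∈ s, ‖a i‖ := by
  classical
  induction s using Finset.induction_on with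
  | empty => simpa using hδ
  | insert i s hi ih =>
    rw [forall_mem_insert] at hb hab
    have hprod_b : ‖∏ i ∈ s, b i‖ ≤ ∏ i ∈ s, ‖a i‖ := by
      rw [norm_prod]
      exact prod_le_prod (fun _ _ => norm_nonneg _) hb.2
    rw [prod_insert hi, prod_insert hi, prod_insert hi]
    calc ‖a i * ∏ i ∈ s, a i - b i * ∏ i ∈ s, b i‖
        = ‖a i * (∏ i ∈ s, a i - ∏ i ∈ s, b i) + (a i - b i) * ∏ i ∈ s, b i‖ := by ring_nf
      _ ≤ max (‖a i‖ * (δ * ∏ i ∈ s, ‖a i‖)) (δ * ‖a i‖ * ∏ i ∈ s, ‖a i‖) := by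
        refine (norm_add_le_max _ _).trans (max_le_max ?_ ?_) <;> rw [norm_mul]
        · exact mul_le_mul_of_nonneg_left (ih hb.2 hab.2) (norm_nonneg _)
        · exact mul_le_mul hab.1 hprod_b (norm_nonneg _) (by positivity)
      _ = δ * (‖a i‖ * ∏ i ∈ s, ‖a i‖) := by
        rw [show ‖a i‖ * (δ * ∏ i ∈ s, ‖a i‖) = δ * ‖a i‖ * ∏ i ∈ s, ‖a i‖ by ring, max_self,
          mul_assoc]

lemma norm_prod_sub_sub_prod_sub_eq {ι : Type*} [DecidableEq ι] {s : Finset ι} {c : ι → K}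
    {x y : K} {j : ι} (hj : j ∈ s) {ε t : ℝ} (hε : 0 < ε) (ht0 : 0 ≤ t) (ht1 : t < 1)
    (hxj : ‖x - c j‖ ≤ ε) (hxy : ‖x - y‖ ≤ ε) (hfar : ∀ i ∈ s.erase j, ε ≤ t * ‖x - c i‖) :
    ‖∏ i ∈ s, (x - c i) - ∏ i ∈ s, (y - c i)‖ = ‖x - y‖ * ∏ i ∈ s.erase j, ‖x - c i‖ := by
  obtain rfl | hne := eq_or_ne x y
  · simp
  have hxy0 : 0 < ‖x - y‖ := norm_pos_iff.2 (sub_ne_zero.2 hne)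
  have hfar' : ∀ i ∈ s.erase j, ‖x - y‖ < ‖x - c i‖ := fun i hi => by
    have := hfar i hi
    nlinarith [norm_nonneg (x - c i)]
  have hyc : ∀ i ∈ s.erase j, ‖y - c i‖ = ‖x - c i‖ := fun i hi => by
    have h := hfar' i hi
    rw [norm_sub_rev] at h
    rw [← sub_add_sub_cancel y x (c i), norm_add_eq_right_of_norm_lt h]
  set P := ∏ i ∈ s.erase j, ‖x - c i‖
  have hP : 0 < P := prod_pos fun i hi => hxy0.trans (hfar' i hi)
  have hC : ‖∏ i ∈ s.erase j, (y - c i)‖ = P := by rw [norm_prod]; exact prod_congr rfl hyc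
  have hBC : ‖∏ i ∈ s.erase j, (x - c i) - ∏ i ∈ s.erase j, (y - c i)‖ ≤ t * ‖x - y‖ / ε * P := by
    refine norm_prod_sub_prod_le (by positivity) (fun i hi => (hyc i hi).le) fun i hi => ?_
    rw [sub_sub_sub_cancel_right, div_mul_eq_mul_div, le_div_iff₀ hε]
    nlinarith [hfar i hi]
  have hsmall : ‖(x - c j) * (∏ i ∈ s.erase j, (x - c i) - ∏ i ∈ s.erase j, (y - c i))‖ <
      ‖(x - y) * ∏ i ∈ s.erase j, (y - c i)‖ := by
    rw [norm_mul, norm_mul, hC]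
    calc ‖x - c j‖ * ‖∏ i ∈ s.erase j, (x - c i) - ∏ i ∈ s.erase j, (y - c i)‖
        ≤ ε * (t * ‖x - y‖ / ε * P) := mul_le_mul hxj hBC (norm_nonneg _) hε.le
      _ = t * (‖x - y‖ * P) := by field_simp
      _ < ‖x - y‖ * P := by nlinarith [mul_pos hxy0 hP]
  rw [← mul_prod_erase s _ hj, ← mul_prod_erase s (fun i => y - c i) hj]
  calc ‖(x - c j) * ∏ i ∈ s.erase j, (x - c i) - (y - c j) * ∏ i ∈ s.erase j, (y - c i)‖
      = ‖(x - c j) * (∏ i ∈ s.erase j, (x - c i) - ∏ i ∈ s.erase j, (y - c i)) +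
          (x - y) * ∏ i ∈ s.erase j, (y - c i)‖ := by ring_nf
    _ = ‖x - y‖ * P := by rw [norm_add_eq_right_of_norm_lt hsmall, norm_mul, hC]

end IsUltrametricDist

lemma prod_eq_pow_sum_card_filter_le {ι : Type*} {s : Finset ι} {f : ι → ℝ} {ρ : ℝ} {l : ℕ}
    (hρ0 : 0 < ρ) (hρ1 : ρ < 1) (hf : ∀ i ∈ s, ∃ n < l, f i = ρ ^ n) :
    ∏ i ∈ s, f i = ρ ^ ∑ m ∈ range l, #{i ∈ s | f i ≤ ρ ^ (m + 1)} := by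
  have hexp : ∀ i ∈ s, f i = ρ ^ #{m ∈ range l | f i ≤ ρ ^ (m + 1)} := fun i hi => by
    obtain ⟨n, hnl, hn⟩ := hf i hi
    have : {m ∈ range l | f i ≤ ρ ^ (m + 1)} = range n := by
      ext m
      simp only [mem_filter, mem_range, hn, pow_le_pow_iff_right_of_lt_one₀ hρ0 hρ1]
      omega
    rw [this, card_range, hn]
  rw [prod_congr rfl hexp, prod_pow_eq_pow_sum]
  simp_rw [card_filter]
  rw [sum_comm]

section DiscreteValuation

variable {K : Type*} [NormedField K] {π : K}

lemma exists_lt_norm_eq_pow (hπ0 : π ≠ 0) (hπ1 : ‖π‖ < 1)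
    (hπuni : ∀ x : K, x ≠ 0 → ∃ n : ℤ, ‖x‖ = ‖π‖ ^ n) {z : K} {l : ℕ} (hz1 : ‖z‖ ≤ 1)
    (hlz : ‖π‖ ^ l < ‖z‖) : ∃ n < l, ‖z‖ = ‖π‖ ^ n := by
  have hπpos : 0 < ‖π‖ := norm_pos_iff.2 hπ0
  have hz : z ≠ 0 := norm_pos_iff.1 ((pow_pos hπpos l).trans hlz)
  obtain ⟨n, hn⟩ := hπuni z hz
  have hn0 : 0 ≤ n := by
    rw [← zpow_le_zpow_iff_right_of_lt_one₀ hπpos hπ1, zpow_zero, ← hn]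
    exact hz1
  have hnl : n < l := by
    rw [← zpow_lt_zpow_iff_right_of_lt_one₀ hπpos hπ1, zpow_natCast, ← hn]
    exact hlz
  refine ⟨n.toNat, by omega, ?_⟩
  rw [hn, ← zpow_natCast, Int.toNat_of_nonneg hn0]

lemma pow_le_mul_norm_of_pow_lt_norm (hπ0 : π ≠ 0) (hπ1 : ‖π‖ < 1)
    (hπuni : ∀ x : K, x ≠ 0 → ∃ n : ℤ, ‖x‖ = ‖π‖ ^ n) {z : K} {l : ℕ} (hz1 : ‖z‖ ≤ 1)
    (hlz : ‖π‖ ^ l < ‖z‖) : ‖π‖ ^ l ≤ ‖π‖ * ‖z‖ := by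
  obtain ⟨n, hnl, hn⟩ := exists_lt_norm_eq_pow hπ0 hπ1 hπuni hz1 hlz
  rw [hn, ← pow_succ']
  exact pow_le_pow_of_le_one (norm_nonneg π) hπ1.le hnl

end DiscreteValuation

section WellDistributed

variable {K : Type*} [NormedField K]

def IsWellOrdered (q : ℕ) (π : K) (u : ℕ → K) : Prop :=
  ∀ n m : ℕ, n < m → ‖u m - u n‖ = ‖π‖ ^ padicValNat q (m - n)

variable {q : ℕ} {π : K} {u : ℕ → K}

namespace IsVeryWellDistributed

lemma card_filter_norm_sub_le (h : IsVeryWellDistributed q π u) (hq : 0 < q) {c : K}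
    (hc : ‖c‖ ≤ 1) {l m : ℕ} (hm : m ≤ l) :
    #{i ∈ range (q ^ l) | ‖c - u i‖ ≤ ‖π‖ ^ m} = q ^ (l - m) := by
  have := h m c hc (q ^ (l - m)) (Nat.one_le_pow _ _ hq)
  rw [← pow_add, Nat.sub_add_cancel hm] at this
  simpa only [norm_sub_rev] using this

lemma exists_near (h : IsVeryWellDistributed q π u) (hq : 0 < q) {c : K} (hc : ‖c‖ ≤ 1)
    (l : ℕ) : ∃ j ∈ range (q ^ l), ‖c - u j‖ ≤ ‖π‖ ^ l ∧
      ∀ i ∈ range (q ^ l), i ≠ j → ‖π‖ ^ l < ‖c - u i‖ := by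
  have hcard := h.card_filter_norm_sub_le (l := l) hq hc le_rfl
  rw [Nat.sub_self, pow_zero, card_eq_one] at hcard
  obtain ⟨j, hj⟩ := hcard
  obtain ⟨hjmem, huniq⟩ := eq_singleton_iff_unique_mem.1 hj
  rw [mem_filter] at hjmem
  refine ⟨j, hjmem.1, hjmem.2, fun i hi hij => lt_of_not_ge fun hle => hij ?_⟩
  exact huniq i (mem_filter.2 ⟨hi, hle⟩)

lemma prod_erase_norm_sub [IsUltrametricDist K] (h : IsVeryWellDistributed q π u) (hq : 0 < q) (hπ0 : π ≠ 0)
    (hπ1 : ‖π‖ < 1) (hπuni : ∀ x : K, x ≠ 0 → ∃ n : ℤ, ‖x‖ = ‖π‖ ^ n) (hu1 : ∀ k, ‖u k‖ ≤ 1)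
    {c : K} (hc : ‖c‖ ≤ 1) {l j : ℕ} (hj : j ∈ range (q ^ l)) (hnear : ‖c - u j‖ ≤ ‖π‖ ^ l)
    (hfar : ∀ i ∈ range (q ^ l), i ≠ j → ‖π‖ ^ l < ‖c - u i‖) :
    ∏ i ∈ (range (q ^ l)).erase j, ‖c - u i‖ = ‖π‖ ^ ∑ m ∈ range l, (q ^ m - 1) := by
  rw [prod_eq_pow_sum_card_filter_le (norm_pos_iff.2 hπ0) hπ1 fun i hi =>
    exists_lt_norm_eq_pow hπ0 hπ1 hπuni
      ((IsUltrametricDist.norm_sub_le_max c (u i)).trans (max_le hc (hu1 i)))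
      (hfar i (mem_of_mem_erase hi) (ne_of_mem_erase hi))]
  congr 1
  rw [← sum_range_reflect]
  refine sum_congr rfl fun m hm => ?_
  rw [mem_range] at hm
  have hjm : j ∈ ({i ∈ range (q ^ l) | ‖c - u i‖ ≤ ‖π‖ ^ (l - 1 - m + 1)}) :=
    mem_filter.2 ⟨hj, hnear.trans (pow_le_pow_of_le_one (norm_nonneg π) hπ1.le (by omega))⟩
  rw [filter_erase, card_erase_of_mem hjm,
    h.card_filter_norm_sub_le hq hc (by omega : l - 1 - m + 1 ≤ l)]
  congr 2
  omega

end IsVeryWellDistributed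

lemma IsWellOrdered.norm_sub_eq_of_near (h : IsWellOrdered q π u) (hq : 1 < q) (hπ0 : π ≠ 0)
    (hπ1 : ‖π‖ < 1) {l j : ℕ} (hj : j < q ^ l) (hnear : ‖u (q ^ l) - u j‖ ≤ ‖π‖ ^ l) :
    ‖u (q ^ l) - u j‖ = ‖π‖ ^ l := by
  rw [h j _ hj] at hnear ⊢
  have hge : l ≤ padicValNat q (q ^ l - j) :=
    (pow_le_pow_iff_right_of_lt_one₀ (norm_pos_iff.2 hπ0) hπ1).1 hnear
  have hle : padicValNat q (q ^ l - j) ≤ l := by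
    rw [← Nat.pow_le_pow_iff_right hq]
    exact (Nat.le_of_dvd (by omega) pow_padicValNat_dvd).trans (Nat.sub_le _ _)
  rw [le_antisymm hle hge]

end WellDistributed

theorem stmt11_general {K : Type*} [NontriviallyNormedField K] [IsUltrametricDist K]
    (q : ℕ) (hq : 1 < q) (π : K) (hπ0 : π ≠ 0) (hπ1 : ‖π‖ < 1)
    (hπuni : ∀ x : K, x ≠ 0 → ∃ n : ℤ, ‖x‖ = ‖π‖ ^ n)
    (u : ℕ → K) (hu1 : ∀ k, ‖u k‖ ≤ 1)
    (hwd : ∀ (k : ℕ) (c : K), ‖c‖ ≤ 1 → ∀ m : ℕ, 1 ≤ m →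
      ((Finset.range (m * q ^ k)).filter fun i => ‖u i - c‖ ≤ ‖π‖ ^ k).card = m)
    (hwo : ∀ n m : ℕ, n < m → ‖u m - u n‖ = ‖π‖ ^ (padicValNat q (m - n)))
    (Q : ℕ → K → K)
    (hQ : ∀ (k : ℕ) (x : K), Q k x =
      (∏ i ∈ Finset.range k, (x - u i)) / (∏ i ∈ Finset.range k, (u k - u i))) :
    ∀ (l : ℕ) (x y : K), ‖x‖ ≤ 1 → ‖y‖ ≤ 1 → ‖x - y‖ ≤ ‖π‖ ^ l →
      ‖Q (q ^ l) x - Q (q ^ l) y‖ = (‖π‖ ^ l)⁻¹ * ‖x - y‖ := by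
  intro l x y hx _ hxy
  have hπpos : 0 < ‖π‖ := norm_pos_iff.2 hπ0
  have hwd' : IsVeryWellDistributed q π u := hwd
  have hq0 : 0 < q := by omega
  obtain ⟨j, hj, hxj, hxfar⟩ := hwd'.exists_near hq0 hx l
  obtain ⟨j', hj', hkj', hkfar⟩ := hwd'.exists_near hq0 (hu1 (q ^ l)) l
  have hfar : ∀ i ∈ (range (q ^ l)).erase j, ‖π‖ ^ l ≤ ‖π‖ * ‖x - u i‖ := fun i hi =>
    pow_le_mul_norm_of_pow_lt_norm hπ0 hπ1 hπuni
      ((IsUltrametricDist.norm_sub_le_max x (u i)).trans (max_le hx (hu1 i)))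
      (hxfar i (mem_of_mem_erase hi) (ne_of_mem_erase hi))
  have hden : ‖u (q ^ l) - u j'‖ = ‖π‖ ^ l :=
    IsWellOrdered.norm_sub_eq_of_near hwo hq hπ0 hπ1 (mem_range.1 hj') hkj'
  rw [hQ, hQ, div_sub_div_same, norm_div,
    IsUltrametricDist.norm_prod_sub_sub_prod_sub_eq hj (pow_pos hπpos l) hπpos.le hπ1 hxj hxy
      hfar,
    ← mul_prod_erase _ _ hj', norm_mul, norm_prod, hden,
    hwd'.prod_erase_norm_sub hq0 hπ0 hπ1 hπuni hu1 hx hj hxj hxfar,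
    hwd'.prod_erase_norm_sub hq0 hπ0 hπ1 hπuni hu1 (hu1 _) hj' hkj' hkfar]
  field_simp

/-- For a T.B.R.B.O. sequence `u` in the ring of integers of a
non-archimedean local field and `k = q^ℓ`, the interpolating polynomial `Q_k`
scales distances exactly by `κ_k = ‖π‖^{-ℓ}` at scale `1/κ_k = ‖π‖^ℓ`:
`‖Q_k(x) - Q_k(y)‖ = κ_k·‖x - y‖` for all `x, y` in the unit ball with
`‖x - y‖ ≤ ‖π‖^ℓ`. -/
theorem stmt11 {K : Type*} [NontriviallyNormedField K] [IsUltrametricDist K]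
    [CompleteSpace K] [ProperSpace K]
    (q : ℕ) (hq : 1 < q) (π : K) (hπ0 : π ≠ 0) (hπ1 : ‖π‖ < 1)
    (hπuni : ∀ x : K, x ≠ 0 → ∃ n : ℤ, ‖x‖ = ‖π‖ ^ n)
    (u : ℕ → K) (hu1 : ∀ k, ‖u k‖ ≤ 1)
    (hwd : ∀ (k : ℕ) (c : K), ‖c‖ ≤ 1 → ∀ m : ℕ, 1 ≤ m →
      ((Finset.range (m * q ^ k)).filter fun i => ‖u i - c‖ ≤ ‖π‖ ^ k).card = m)
    (hwo : ∀ n m : ℕ, n < m → ‖u m - u n‖ = ‖π‖ ^ (padicValNat q (m - n)))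
    (Q : ℕ → K → K)
    (hQ : ∀ (k : ℕ) (x : K), Q k x =
      (∏ i ∈ Finset.range k, (x - u i)) / (∏ i ∈ Finset.range k, (u k - u i))) :
    ∀ (l : ℕ) (x y : K), ‖x‖ ≤ 1 → ‖y‖ ≤ 1 → ‖x - y‖ ≤ ‖π‖ ^ l →
      ‖Q (q ^ l) x - Q (q ^ l) y‖ = (‖π‖ ^ l)⁻¹ * ‖x - y‖ :=
  stmt11_general q hq π hπ0 hπ1 hπuni u hu1 hwd hwo Q hQ
end

section
/- For any u ∈ Z_p^× (p-adic unit) and any polynomial F ∈ Z_p[x], the map T : Z_p → Z_p defined by T(x) = u·C(x,p) + F(x), where C(x,p) = x(x−1)⋯(x−p+1)/p!, satisfies |T(x)−T(y)| = p·|x−y| whenever |x−y| ≤ 1/p, and hence defines a measure-preserving transformation of Z_p isomorphic to the Bernoulli shift on (Z/pZ)^N. In particular the Woodcock–Smart map x ↦ (x^p − x)/p is Bernoulli on Z_p. -/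
/-!
A map `T : ℤ_[p] → ℤ_[p]` with `‖T x - T y‖ = p‖x - y‖` whenever `‖x - y‖ ≤ 1/p` becomes an
isometry of `ℤ_[p]` once restricted to a residue class `a + pℤ_[p]` and rescaled. An isometry of
`ℤ_[p]` meets every residue class mod `p^m`, as it induces an injection, hence a bijection, of
`ℤ/p^m`; so the points of a residue class mod `p` that `T` maps into a ball of radius `p^{-m}`
form a ball of radius `p^{-(m+1)}`. By induction, prescribing the first `m` residues mod `p` along
a `T`-orbit cuts out a ball of radius `p^{-m}`, of Haar measure `p^{-m}`, so the residue itinerary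
codes `T` by the Bernoulli shift; and the preimage of a ball of radius `p^{-m}` is a disjoint union
of `p` balls of radius `p^{-(m+1)}`, so `T` preserves Haar measure.

Both `u·C(x,p) + F(x)` and `(x^p - x)/p` have the form `v·P(x) + G(x)` with `‖v‖ = p`,
`P, G ∈ ℤ_[p][X]` and `P'` a unit on `ℤ_[p]`. By the first-order Taylor expansion of `P`,
`‖P x - P y‖ = ‖x - y‖` when `‖x - y‖ < 1`, while `G` is `1`-Lipschitz, so such maps scale
distances by `p` at scale `1/p`.
-/

theorem IsUltrametricDist.norm_add_eq_left_of_norm_lt {S : Type*} [SeminormedAddGroup S]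
    [IsUltrametricDist S] {x y : S} (h : ‖y‖ < ‖x‖) : ‖x + y‖ = ‖x‖ := by
  rw [norm_add_eq_max_of_norm_ne_norm h.ne', max_eq_left h.le]

namespace PadicInt

open MeasureTheory Metric Polynomial Set

variable {p : ℕ} [hp : Fact p.Prime]

variable (p) in
lemma inv_natCast_lt_one : (p : ℝ)⁻¹ < 1 :=
  inv_lt_one_of_one_lt₀ (by exact_mod_cast hp.out.one_lt)

lemma norm_sub_le_inv_pow_iff (n : ℕ) (x y : ℤ_[p]) :
    ‖x - y‖ ≤ (p : ℝ)⁻¹ ^ n ↔ toZModPow n x = toZModPow n y := by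
  rw [inv_pow, ← zpow_natCast, ← zpow_neg, norm_le_pow_iff_mem_span_pow, ← ker_toZModPow,
    RingHom.mem_ker, map_sub, sub_eq_zero]

lemma norm_sub_le_inv_iff (x y : ℤ_[p]) : ‖x - y‖ ≤ (p : ℝ)⁻¹ ↔ toZMod x = toZMod y := by
  rw [← sub_eq_zero, ← map_sub, ← RingHom.mem_ker, ker_toZMod, maximalIdeal_eq_span_p,
    ← pow_one (p : ℤ_[p]), ← norm_le_pow_iff_mem_span_pow, Nat.cast_one, zpow_neg_one]

lemma norm_eq_one_iff_toZMod_ne_zero (z : ℤ_[p]) : ‖z‖ = 1 ↔ toZMod z ≠ 0 := by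
  rw [← isUnit_iff, ne_eq, ← RingHom.mem_ker, ker_toZMod, IsLocalRing.mem_maximalIdeal,
    mem_nonunits_iff, not_not]

lemma norm_le_inv_of_norm_lt_one {z : ℤ_[p]} (h : ‖z‖ < 1) : ‖z‖ ≤ (p : ℝ)⁻¹ := by
  simpa using (norm_le_pow_iff_norm_lt_pow_add_one z (-1)).2 (by simpa using h)

lemma toZModPow_natCast_val (n : ℕ) (k : ZMod (p ^ n)) : toZModPow n (k.val : ℤ_[p]) = k := by
  have : NeZero (p ^ n) := ⟨pow_ne_zero _ hp.out.ne_zero⟩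
  simp

lemma exists_toZModPow_eq_of_isometry {g : ℤ_[p] → ℤ_[p]} (hg : Isometry g) (n : ℕ)
    (z : ℤ_[p]) : ∃ b, toZModPow n (g b) = toZModPow n z := by
  have hinj : Function.Injective fun k : ZMod (p ^ n) => toZModPow n (g k.val) := by
    intro k k' h
    have h' := (norm_sub_le_inv_pow_iff n _ _).2 h
    rwa [← dist_eq_norm, hg.dist_eq, dist_eq_norm, norm_sub_le_inv_pow_iff,
      toZModPow_natCast_val, toZModPow_natCast_val] at h'
  obtain ⟨k, hk⟩ := Finite.injective_iff_surjective.1 hinj (toZModPow n z)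
  exact ⟨_, hk⟩

lemma closedBall_zero_eq_ker (n : ℕ) :
    closedBall (0 : ℤ_[p]) ((p : ℝ)⁻¹ ^ n) =
      ((toZModPow n : ℤ_[p] →+* ZMod (p ^ n)).toAddMonoidHom.ker : Set ℤ_[p]) := by
  ext x
  simpa using norm_sub_le_inv_pow_iff n x 0

lemma closedBall_inv_pow_zero (c : ℤ_[p]) : closedBall c ((p : ℝ)⁻¹ ^ 0) = univ :=
  eq_univ_of_forall fun x => by simpa [dist_eq_norm] using norm_le_one (x - c)

lemma isTopologicalBasis_closedBall :
    TopologicalSpace.IsTopologicalBasis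
      (range fun q : ℤ_[p] × ℕ => closedBall q.1 ((p : ℝ)⁻¹ ^ q.2)) := by
  refine TopologicalSpace.isTopologicalBasis_of_isOpen_of_nhds ?_ fun x U hx hU => ?_
  · rintro _ ⟨⟨c, n⟩, rfl⟩
    exact IsUltrametricDist.isOpen_closedBall c (by simp [hp.out.ne_zero])
  · obtain ⟨ε, hε, hball⟩ := isOpen_iff.1 hU x hx
    obtain ⟨n, hn⟩ := exists_pow_lt_of_lt_one hε (inv_natCast_lt_one p)
    exact ⟨_, ⟨(x, n), rfl⟩, mem_closedBall_self (by positivity),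
      (closedBall_subset_ball hn).trans hball⟩

lemma isPiSystem_closedBall :
    IsPiSystem (range fun q : ℤ_[p] × ℕ => closedBall q.1 ((p : ℝ)⁻¹ ^ q.2)) := by
  rintro _ ⟨⟨c, m⟩, rfl⟩ _ ⟨⟨c', n⟩, rfl⟩ hne
  rcases IsUltrametricDist.closedBall_subset_trichotomy (x := c) (y := c')
    (r := (p : ℝ)⁻¹ ^ m) (s := (p : ℝ)⁻¹ ^ n) with h | h | h
  · exact ⟨(c, m), (inter_eq_left.2 h).symm⟩
  · exact ⟨(c', n), (inter_eq_right.2 h).symm⟩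
  · exact absurd h (not_disjoint_iff_nonempty_inter.2 hne)

section Haar

variable [MeasurableSpace ℤ_[p]] [BorelSpace ℤ_[p]]

lemma natCast_pow_mul_measure_closedBall (μ : Measure ℤ_[p]) [μ.IsAddLeftInvariant]
    (c : ℤ_[p]) (n : ℕ) : (p : ENNReal) ^ n * μ (closedBall c ((p : ℝ)⁻¹ ^ n)) = μ univ := by
  set H := (toZModPow n : ℤ_[p] →+* ZMod (p ^ n)).toAddMonoidHom.ker
  have hindex : H.index = p ^ n := by
    rw [AddSubgroup.index_ker, AddMonoidHom.range_eq_top.2 (ZMod.ringHom_surjective _),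
      AddSubgroup.card_top, Nat.card_zmod]
  have : H.FiniteIndex := ⟨by rw [hindex]; exact pow_ne_zero _ hp.out.ne_zero⟩
  have hball : closedBall (0 : ℤ_[p]) ((p : ℝ)⁻¹ ^ n) =
      (c + ·) ⁻¹' closedBall c ((p : ℝ)⁻¹ ^ n) := by
    rw [preimage_add_closedBall, sub_self]
  rw [← measure_preimage_add μ c, ← hball, closedBall_zero_eq_ker, ← H.index_mul_measure, hindex]
  · norm_cast
  · rw [← closedBall_zero_eq_ker]; exact measurableSet_closedBall

lemma measure_closedBall (μ : Measure ℤ_[p]) [μ.IsAddLeftInvariant] [IsProbabilityMeasure μ]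
    (c : ℤ_[p]) (n : ℕ) : μ (closedBall c ((p : ℝ)⁻¹ ^ n)) = (p : ENNReal)⁻¹ ^ n := by
  rw [← ENNReal.inv_pow]
  exact ENNReal.eq_inv_of_mul_eq_one_left (by
    rw [mul_comm, natCast_pow_mul_measure_closedBall, measure_univ])

lemma measure_ext_of_closedBall {μ ν : Measure ℤ_[p]} [IsFiniteMeasure μ]
    (h : ∀ c n, μ (closedBall c ((p : ℝ)⁻¹ ^ n)) = ν (closedBall c ((p : ℝ)⁻¹ ^ n))) : μ = ν := by
  refine ext_of_generate_finite _ ?_ isPiSystem_closedBall ?_ ?_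
  · rw [BorelSpace.measurable_eq (α := ℤ_[p]), isTopologicalBasis_closedBall.borel_eq_generateFrom]
  · rintro _ ⟨⟨c, n⟩, rfl⟩
    exact h c n
  · rw [← closedBall_inv_pow_zero 0, h]

end Haar

def LocallyScalesByP (T : ℤ_[p] → ℤ_[p]) : Prop :=
  ∀ x y, ‖x - y‖ ≤ (p : ℝ)⁻¹ → ‖T x - T y‖ = p * ‖x - y‖

noncomputable def itinerary (T : ℤ_[p] → ℤ_[p]) (x : ℤ_[p]) (n : ℕ) : ZMod p := toZMod (T^[n] x)

def cylinder (T : ℤ_[p] → ℤ_[p]) (m : ℕ) (d : ℕ → ZMod p) : Set ℤ_[p] :=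
  {x | ∀ n < m, itinerary T x n = d n}

lemma cylinder_succ (T : ℤ_[p] → ℤ_[p]) (m : ℕ) (d : ℕ → ZMod p) :
    cylinder T (m + 1) d = {x | toZMod x = d 0 ∧ T x ∈ cylinder T m fun n => d (n + 1)} := by
  ext x
  simp only [cylinder, mem_ofPred_eq, Nat.forall_lt_succ_left]
  rfl

namespace LocallyScalesByP

variable {T : ℤ_[p] → ℤ_[p]} (hT : LocallyScalesByP T)
include hT

lemma lipschitzWith : LipschitzWith p T := by
  refine LipschitzWith.of_dist_le_mul fun x y => ?_
  rw [dist_eq_norm, dist_eq_norm, NNReal.coe_natCast]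
  by_cases hxy : ‖x - y‖ ≤ (p : ℝ)⁻¹
  · exact (hT x y hxy).le
  · have h1 : 1 ≤ ‖x - y‖ := not_lt.1 fun h => hxy (norm_le_inv_of_norm_lt_one h)
    calc ‖T x - T y‖ ≤ 1 := norm_le_one _
      _ ≤ p * ‖x - y‖ := one_le_mul_of_one_le_of_one_le (by exact_mod_cast hp.out.one_le) h1

lemma exists_closedBall_eq (a : ZMod p) (c : ℤ_[p]) (m : ℕ) :
    ∃ c', {x | toZMod x = a ∧ T x ∈ closedBall c ((p : ℝ)⁻¹ ^ m)} =
      closedBall c' ((p : ℝ)⁻¹ ^ (m + 1)) := by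
  have hp0 : (p : ℝ) ≠ 0 := by exact_mod_cast hp.out.ne_zero
  set e : ℤ_[p] → ℤ_[p] := fun b => (a.val : ℤ_[p]) + p * b
  have he : ∀ b, toZMod (e b) = a := by simp [e]
  have hiso : Isometry (T ∘ e) := Isometry.of_dist_eq fun b b' => by
    have hd : ‖e b - e b'‖ = (p : ℝ)⁻¹ * ‖b - b'‖ := by
      simp only [e, add_sub_add_left_eq_sub, ← mul_sub, norm_mul, norm_p]
    rw [dist_eq_norm, dist_eq_norm, Function.comp_apply, Function.comp_apply,
      hT _ _ (hd ▸ mul_le_of_le_one_right (by positivity) (norm_le_one _)), hd, ← mul_assoc,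
      mul_inv_cancel₀ hp0, one_mul]
  obtain ⟨b, hb⟩ := exists_toZModPow_eq_of_isometry hiso m c
  have hc : dist (T (e b)) c ≤ (p : ℝ)⁻¹ ^ m := by
    rw [dist_eq_norm]; exact (norm_sub_le_inv_pow_iff m _ _).2 hb
  have hscale : ∀ r : ℝ, p * r ≤ (p : ℝ)⁻¹ ^ m ↔ r ≤ (p : ℝ)⁻¹ ^ (m + 1) := fun r => by
    rw [pow_succ, ← div_eq_mul_inv, le_div_iff₀ (by positivity), mul_comm]
  refine ⟨e b, Set.ext fun x => ⟨fun ⟨hx, hTx⟩ => ?_, fun hx => ?_⟩⟩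
  · have hxe : ‖x - e b‖ ≤ (p : ℝ)⁻¹ := (norm_sub_le_inv_iff _ _).2 (hx.trans (he b).symm)
    have h : p * ‖x - e b‖ ≤ (p : ℝ)⁻¹ ^ m := by
      rw [← hT _ _ hxe, ← dist_eq_norm]
      exact (IsUltrametricDist.dist_triangle_max _ c _).trans
        (max_le hTx (by rwa [dist_comm]))
    exact mem_closedBall_iff_norm.2 ((hscale _).1 h)
  · have hxe : ‖x - e b‖ ≤ (p : ℝ)⁻¹ := (mem_closedBall_iff_norm.1 hx).trans
      (pow_le_of_le_one (by positivity) (inv_natCast_lt_one p).le m.succ_ne_zero)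
    refine ⟨((norm_sub_le_inv_iff _ _).1 hxe).trans (he b), ?_⟩
    refine (IsUltrametricDist.dist_triangle_max _ (T (e b)) c).trans (max_le ?_ hc)
    rw [dist_eq_norm, hT _ _ hxe, hscale]
    exact mem_closedBall_iff_norm.1 hx

lemma exists_cylinder_eq_closedBall (m : ℕ) (d : ℕ → ZMod p) :
    ∃ c, cylinder T m d = closedBall c ((p : ℝ)⁻¹ ^ m) := by
  induction m generalizing d with
  | zero =>
    refine ⟨0, (eq_univ_of_forall fun x => ?_).trans (closedBall_inv_pow_zero 0).symm⟩
    simp [cylinder]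
  | succ m ih =>
    obtain ⟨c, hc⟩ := ih fun n => d (n + 1)
    rw [cylinder_succ, hc]
    exact hT.exists_closedBall_eq (d 0) c m

lemma cylinder_itinerary (x : ℤ_[p]) (m : ℕ) :
    cylinder T m (itinerary T x) = closedBall x ((p : ℝ)⁻¹ ^ m) := by
  obtain ⟨c, hc⟩ := hT.exists_cylinder_eq_closedBall m (itinerary T x)
  have hx : x ∈ cylinder T m (itinerary T x) := fun _ _ => rfl
  rw [hc] at hx ⊢
  exact IsUltrametricDist.closedBall_eq_of_mem hx

lemma itinerary_injective : Function.Injective (itinerary T) := by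
  intro x y hxy
  refine eq_of_forall_dist_le fun ε hε => ?_
  obtain ⟨m, hm⟩ := exists_pow_lt_of_lt_one hε (inv_natCast_lt_one p)
  have hx : x ∈ cylinder T m (itinerary T y) := fun n _ => congrFun hxy n
  rw [hT.cylinder_itinerary] at hx
  exact hx.trans hm.le

lemma itinerary_surjective : Function.Surjective (itinerary T) := by
  intro d
  have hball : ∀ m, ∃ c, cylinder T m d = closedBall c ((p : ℝ)⁻¹ ^ m) :=
    fun m => hT.exists_cylinder_eq_closedBall m d
  have hclosed : ∀ m, IsClosed (cylinder T m d) := fun m => by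
    obtain ⟨c, hc⟩ := hball m
    exact hc ▸ isClosed_closedBall
  obtain ⟨x, hx⟩ := IsCompact.nonempty_iInter_of_sequence_nonempty_isCompact_isClosed
    (cylinder T · d) (fun m x hx n hn => hx n (by omega))
    (fun m => by obtain ⟨c, hc⟩ := hball m; exact hc ▸ nonempty_closedBall.2 (by positivity))
    (hclosed 0).isCompact hclosed
  exact ⟨x, funext fun n => mem_iInter.1 hx (n + 1) n n.lt_succ_self⟩

section Measure

variable [MeasurableSpace ℤ_[p]] [BorelSpace ℤ_[p]] (μ : Measure ℤ_[p]) [μ.IsAddLeftInvariant]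
  [IsProbabilityMeasure μ]

lemma measure_cylinder (m : ℕ) (d : ℕ → ZMod p) :
    μ (cylinder T m d) = (p : ENNReal)⁻¹ ^ m := by
  obtain ⟨c, hc⟩ := hT.exists_cylinder_eq_closedBall m d
  rw [hc, measure_closedBall]

lemma measurePreserving : MeasurePreserving T μ μ := by
  have hmeas : Measurable T := hT.lipschitzWith.continuous.measurable
  refine ⟨hmeas, measure_ext_of_closedBall fun c m => ?_⟩
  have hpre : T ⁻¹' closedBall c ((p : ℝ)⁻¹ ^ m) =
      ⋃ a : ZMod p, {x | toZMod x = a ∧ T x ∈ closedBall c ((p : ℝ)⁻¹ ^ m)} := by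
    ext x; simp
  choose c' hc' using fun a : ZMod p => hT.exists_closedBall_eq a c m
  rw [Measure.map_apply hmeas measurableSet_closedBall, hpre, measure_iUnion, tsum_fintype]
  · simp only [hc', measure_closedBall, Finset.sum_const, Finset.card_univ, ZMod.card, nsmul_eq_mul]
    rw [pow_succ, mul_comm, mul_assoc, ENNReal.inv_mul_cancel (by exact_mod_cast hp.out.ne_zero)
      (ENNReal.natCast_ne_top p), mul_one]
  · exact fun a b hab => disjoint_left.2 fun x hxa hxb => hab (hxa.1.symm.trans hxb.1)
  · exact fun a => hc' a ▸ measurableSet_closedBall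

end Measure

end LocallyScalesByP

@[simp, norm_cast]
lemma coe_prod {α : Type*} (s : Finset α) (f : α → ℤ_[p]) :
    (((∏ i ∈ s, f i) : ℤ_[p]) : ℚ_[p]) = ∏ i ∈ s, (f i : ℚ_[p]) :=
  map_prod Coe.ringHom f s

lemma norm_eval_sub_eval_le (F : ℤ_[p][X]) (x y : ℤ_[p]) :
    ‖F.eval x - F.eval y‖ ≤ ‖x - y‖ := by
  obtain ⟨k, hk⟩ := sub_dvd_eval_sub x y F
  rw [hk, norm_mul]
  exact mul_le_of_le_one_right (norm_nonneg _) (norm_le_one k)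

lemma norm_eval_sub_eval_eq_of_norm_derivative_eq_one (P : ℤ_[p][X]) {x y : ℤ_[p]}
    (hP : ‖P.derivative.eval x‖ = 1) (hxy : ‖y - x‖ < 1) :
    ‖P.eval y - P.eval x‖ = ‖y - x‖ := by
  obtain ⟨k, hk⟩ := P.binomExpansion x (y - x)
  rw [add_sub_cancel] at hk
  rcases eq_or_ne (y - x) 0 with h0 | h0
  · rw [h0, sub_eq_zero.1 h0, sub_self, norm_zero]
  have hlin : ‖P.derivative.eval x * (y - x)‖ = ‖y - x‖ := by rw [norm_mul, hP, one_mul]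
  have hquad : ‖k * (y - x) ^ 2‖ < ‖y - x‖ :=
    calc ‖k * (y - x) ^ 2‖ ≤ ‖y - x‖ ^ 2 := by
          rw [norm_mul, norm_pow]; exact mul_le_of_le_one_left (by positivity) (norm_le_one k)
      _ < ‖y - x‖ := by
          rw [sq]; exact mul_lt_of_lt_one_left (norm_pos_iff.2 h0) hxy
  rw [hk, add_assoc, add_sub_cancel_left,
    IsUltrametricDist.norm_add_eq_left_of_norm_lt (hlin ▸ hquad), hlin]

lemma locallyScalesByP_of_coe_eq {v : ℚ_[p]} (hv : ‖v‖ = p) {P G : ℤ_[p][X]}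
    (hP : ∀ x, ‖P.derivative.eval x‖ = 1) {T : ℤ_[p] → ℤ_[p]}
    (hT : ∀ x, (T x : ℚ_[p]) = v * P.eval x + G.eval x) : LocallyScalesByP T := by
  intro x y hxy
  rcases eq_or_ne x y with rfl | hne
  · simp
  have hpos : 0 < ‖x - y‖ := norm_pos_iff.2 (sub_ne_zero.2 hne)
  have hlt : ‖x - y‖ < 1 := hxy.trans_lt (inv_natCast_lt_one p)
  have hdiff : ((T x - T y : ℤ_[p]) : ℚ_[p]) =
      v * ((P.eval x - P.eval y : ℤ_[p]) : ℚ_[p]) + ((G.eval x - G.eval y : ℤ_[p]) : ℚ_[p]) := by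
    push_cast
    rw [hT, hT]
    ring
  have hmain : ‖v * ((P.eval x - P.eval y : ℤ_[p]) : ℚ_[p])‖ = p * ‖x - y‖ := by
    rw [norm_mul, hv, padic_norm_e_of_padicInt,
      norm_eval_sub_eval_eq_of_norm_derivative_eq_one P (hP y) hlt]
  have hsmall : ‖((G.eval x - G.eval y : ℤ_[p]) : ℚ_[p])‖ < p * ‖x - y‖ := by
    rw [padic_norm_e_of_padicInt]
    exact (norm_eval_sub_eval_le G x y).trans_lt
      (lt_mul_of_one_lt_left hpos (by exact_mod_cast hp.out.one_lt))
  rw [norm_def, hdiff, IsUltrametricDist.norm_add_eq_left_of_norm_lt (hmain ▸ hsmall), hmain]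

lemma norm_eval_derivative_X_pow_sub_X (x : ℤ_[p]) :
    ‖(X ^ p - X : ℤ_[p][X]).derivative.eval x‖ = 1 := by
  rw [norm_eq_one_iff_toZMod_ne_zero]
  simp [derivative_X_pow]

lemma norm_eval_derivative_prod_X_sub_C (x : ℤ_[p]) :
    ‖(∏ i ∈ Finset.range p, (X - C (i : ℤ_[p]))).derivative.eval x‖ = 1 := by
  have : NeZero p := ⟨hp.out.ne_zero⟩
  rw [norm_eq_one_iff_toZMod_ne_zero, derivative_prod_finset]
  simp only [derivative_X_sub_C, mul_one, eval_finsetSum, eval_prod, eval_sub, eval_X, eval_C]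
  simp only [map_sum, map_prod, map_sub, map_natCast]
  set a := toZMod x
  have ha : a.val ∈ Finset.range p := Finset.mem_range.2 a.val_lt
  -- mod `p`, only the term omitting the factor `x - a.val` survives
  rw [Finset.sum_eq_single_of_mem a.val ha]
  · refine Finset.prod_ne_zero_iff.2 fun i hi => sub_ne_zero.2 fun h => ?_
    obtain ⟨hne, hi⟩ := Finset.mem_erase.1 hi
    exact hne (by rw [h, ZMod.val_natCast_of_lt (Finset.mem_range.1 hi)])
  · intro j hj hne
    exact Finset.prod_eq_zero (Finset.mem_erase.2 ⟨hne.symm, ha⟩)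
      (by rw [ZMod.natCast_zmod_val, sub_self])

lemma locallyScalesByP_of_coe_eq_unit_mul_choose_add {u : ℤ_[p]} (hu : ‖u‖ = 1)
    (F : ℤ_[p][X]) {T : ℤ_[p] → ℤ_[p]}
    (hT : ∀ x : ℤ_[p], (T x : ℚ_[p]) =
      u * ((∏ i ∈ Finset.range p, ((x : ℚ_[p]) - i)) / (p.factorial : ℚ_[p])) + F.eval x) :
    LocallyScalesByP T := by
  have hfact : ‖(p.factorial : ℚ_[p])‖ = (p : ℝ)⁻¹ := by
    rw [← Nat.mul_factorial_pred hp.out.ne_zero, Nat.cast_mul, norm_mul, Padic.norm_p,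
      Padic.norm_natCast_eq_one_iff.2, mul_one]
    refine (Nat.Prime.coprime_iff_not_dvd hp.out).2 fun h => ?_
    have := hp.out.dvd_factorial.1 h
    have := hp.out.pos
    omega
  refine locallyScalesByP_of_coe_eq (v := (u : ℚ_[p]) / (p.factorial : ℚ_[p])) ?_
    norm_eval_derivative_prod_X_sub_C (G := F) fun x => ?_
  · rw [norm_div, padic_norm_e_of_padicInt, hu, hfact, one_div, inv_inv]
  · simp only [hT, eval_prod, eval_sub, eval_X, eval_C]
    push_cast
    ring

lemma locallyScalesByP_of_coe_eq_woodcockSmart {S : ℤ_[p] → ℤ_[p]}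
    (hS : ∀ x : ℤ_[p], (S x : ℚ_[p]) = ((x : ℚ_[p]) ^ p - x) / p) : LocallyScalesByP S := by
  refine locallyScalesByP_of_coe_eq (v := (p : ℚ_[p])⁻¹) (by simp)
    norm_eval_derivative_X_pow_sub_X (G := 0) fun x => ?_
  simp only [hS, eval_sub, eval_pow, eval_X, eval_zero]
  push_cast
  ring

end PadicInt

open MeasureTheory

/-- For any `p`-adic unit `u` and polynomial `F ∈ ℤ_p[x]`, the map
`T(x) = u·C(x,p) + F(x)` scales distances by `p` at scale `1/p`, hence is a
measure-preserving transformation of `ℤ_p` isomorphic to the Bernoulli shift on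
`(ℤ/pℤ)^ℕ`; in particular the Woodcock–Smart map `x ↦ (x^p - x)/p` is Bernoulli. -/
theorem stmt15 {p : ℕ} [Fact p.Prime]
    [MeasurableSpace ℤ_[p]] [BorelSpace ℤ_[p]]
    (μ : Measure ℤ_[p]) [μ.IsAddHaarMeasure] [IsProbabilityMeasure μ]
    (u : ℤ_[p]) (hu : ‖u‖ = 1) (F : Polynomial ℤ_[p])
    (T : ℤ_[p] → ℤ_[p])
    (hT : ∀ x : ℤ_[p], (T x : ℚ_[p]) =
      (u : ℚ_[p]) * ((∏ i ∈ Finset.range p, ((x : ℚ_[p]) - (i : ℚ_[p]))) /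
        ((Nat.factorial p : ℕ) : ℚ_[p])) + ((F.eval x : ℤ_[p]) : ℚ_[p])) :
    ((∀ x y : ℤ_[p], ‖x - y‖ ≤ (p : ℝ)⁻¹ → ‖T x - T y‖ = (p : ℝ) * ‖x - y‖) ∧
      MeasurePreserving T μ μ ∧
      ∃ Φ : ℤ_[p] → (ℕ → ZMod p),
        Function.Bijective Φ ∧
        (∀ x, Φ (T x) = fun n => Φ x (n + 1)) ∧
        (∀ (m : ℕ) (d : ℕ → ZMod p),
          μ {x | ∀ n < m, Φ x n = d n} = ((p : ENNReal)⁻¹) ^ m)) ∧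
    -- In particular, the Woodcock–Smart map x ↦ (x^p - x)/p is Bernoulli:
    (∀ S : ℤ_[p] → ℤ_[p],
      (∀ x : ℤ_[p], (S x : ℚ_[p]) = ((x : ℚ_[p]) ^ p - (x : ℚ_[p])) / (p : ℚ_[p])) →
      (∀ x y : ℤ_[p], ‖x - y‖ ≤ (p : ℝ)⁻¹ → ‖S x - S y‖ = (p : ℝ) * ‖x - y‖) ∧
      MeasurePreserving S μ μ ∧
      ∃ Φ : ℤ_[p] → (ℕ → ZMod p),
        Function.Bijective Φ ∧
        (∀ x, Φ (S x) = fun n => Φ x (n + 1)) ∧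
        (∀ (m : ℕ) (d : ℕ → ZMod p),
          μ {x | ∀ n < m, Φ x n = d n} = ((p : ENNReal)⁻¹) ^ m)) := by
  have hT' := PadicInt.locallyScalesByP_of_coe_eq_unit_mul_choose_add hu F hT
  refine ⟨⟨hT', hT'.measurePreserving μ, PadicInt.itinerary T,
    ⟨hT'.itinerary_injective, hT'.itinerary_surjective⟩, fun _ => rfl, hT'.measure_cylinder μ⟩,
    fun S hS => ?_⟩
  have hS' := PadicInt.locallyScalesByP_of_coe_eq_woodcockSmart hS
  exact ⟨hS', hS'.measurePreserving μ, PadicInt.itinerary S,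
    ⟨hS'.itinerary_injective, hS'.itinerary_surjective⟩, fun _ => rfl, hS'.measure_cylinder μ⟩
end
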